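/- arXiv:1307.1090 — 10 statements merged into one kernel-verified Lean document; each statement's English description precedes it below -/
import Mathlib

section
/- Let (X,d) be a complete metric space and F = {F_i : i ∈ ℕ} a countable family of contraction maps. Let P be the set of fixed points of finite compositions of members of F. Then the closure of P is an invariant set for F, i.e. cl(P) = cl(⋃_{i∈ℕ} F_i(cl(P))). -/
open Metric Set

/-- The set of fixed points of finite (nonempty) compositions of members of the family `F`. -/
def fixedPtsOfComps {X : Type*} (F : ℕ → X → X) : Set X :=
  {x : X | ∃ l : List ℕ, l ≠ [] ∧ l.foldr (fun i y => F i y) x = x}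

/-!
If `p` is fixed by a composition `A` of the maps and `i` is any index, the maps `F i ∘ A^[n]` are
compositions of the family, all contracting with the constant of `F i`. Since `A^[n] (F i p) → p`,
the point `F i p` is almost fixed by `F i ∘ A^[n]`, and a uniform contraction constant forces the
fixed points of these maps, which lie in `P`, to converge to `F i p`. Hence `F i '' P ⊆ cl P`.
Conversely a fixed point `x` of `F i ∘ G` is the image under `F i` of the fixed point `G x` of
`G ∘ F i`, so `P ⊆ ⋃ i, F i '' P`.
-/

open Filter Topology Function

section Contracting

variable {X : Type*} [MetricSpace X]

theorem tendsto_of_isFixedPt_of_tendsto_apply {ι : Type*} {l : Filter ι} {K : NNReal}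
    {T : ι → X → X} (hT : ∀ n, ContractingWith K (T n)) {x : ι → X}
    (hx : ∀ n, IsFixedPt (T n) (x n)) {y : X} (hy : Tendsto (fun n => T n y) l (𝓝 y)) :
    Tendsto x l (𝓝 y) := by
  have hdist : Tendsto (fun n => dist y (T n y) / (1 - K)) l (𝓝 0) := by
    simpa using ((tendsto_iff_dist_tendsto_zero.1 hy).div_const (1 - (K : ℝ))).congr
      fun n => by rw [dist_comm]
  refine tendsto_iff_dist_tendsto_zero.2 (squeeze_zero (fun _ => dist_nonneg) (fun n => ?_) hdist)
  rw [dist_comm]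
  exact (hT n).dist_le_of_fixedPoint y (hx n)

theorem ContractingWith.tendsto_iterate_of_isFixedPt [CompleteSpace X] {K : NNReal} {A : X → X}
    (hA : ContractingWith K A) {p : X} (hp : IsFixedPt A p) (z : X) :
    Tendsto (fun n => A^[n] z) atTop (𝓝 p) := by
  have : Nonempty X := ⟨p⟩
  simpa only [← hA.fixedPoint_unique hp] using hA.tendsto_iterate_fixedPoint z

end Contracting

section Foldr

variable {ι X : Type*} (F : ι → X → X)

theorem foldr_flatten_replicate (w : List ι) (n : ℕ) (x : X) :
    (List.replicate n w).flatten.foldr F x = (fun z => w.foldr F z)^[n] x := by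
  induction n generalizing x with
  | zero => rfl
  | succ n ih =>
    rw [List.replicate_succ, List.flatten_cons, List.foldr_append, ih, iterate_succ_apply']

variable [MetricSpace X] {F}

theorem lipschitzWith_one_foldr (hF : ∀ i, LipschitzWith 1 (F i)) (l : List ι) :
    LipschitzWith 1 (fun x => l.foldr F x) := by
  induction l with
  | nil => exact LipschitzWith.id
  | cons i l ih => simpa [comp_def] using (hF i).comp ih

theorem contractingWith_foldr_cons {K : ι → NNReal} (hF : ∀ i, ContractingWith (K i) (F i))
    (i : ι) (l : List ι) : ContractingWith (K i) (fun x => (i :: l).foldr F x) :=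
  ⟨(hF i).1, by
    simpa [comp_def] using
      (hF i).2.comp (lipschitzWith_one_foldr (fun j => (hF j).2.weaken (hF j).1.le) l)⟩

end Foldr

section FixedPtsOfComps

variable {X : Type*}

theorem fixedPtsOfComps_subset_iUnion_image (F : ℕ → X → X) :
    fixedPtsOfComps F ⊆ ⋃ i, F i '' fixedPtsOfComps F := by
  rintro x ⟨_ | ⟨i, l⟩, hl, hx⟩
  · exact absurd rfl hl
  refine mem_iUnion.2 ⟨i, l.foldr F x, ⟨l ++ [i], by simp, ?_⟩, hx⟩
  rw [List.foldr_append]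
  exact congrArg (l.foldr F) hx

theorem image_fixedPtsOfComps_subset_closure [MetricSpace X] [CompleteSpace X]
    {F : ℕ → X → X} {K : ℕ → NNReal} (hF : ∀ i, ContractingWith (K i) (F i)) (i : ℕ) :
    F i '' fixedPtsOfComps F ⊆ closure (fixedPtsOfComps F) := by
  rintro _ ⟨p, ⟨_ | ⟨j, w⟩, hw, hp⟩, rfl⟩
  · exact absurd rfl hw
  have : Nonempty X := ⟨p⟩
  set A := fun x => (j :: w).foldr F x
  set T := fun (n : ℕ) x => (i :: (List.replicate n (j :: w)).flatten).foldr F x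
  have hT (n : ℕ) : ContractingWith (K i) (T n) := contractingWith_foldr_cons hF i _
  have hTA (n : ℕ) (x : X) : T n x = F i (A^[n] x) :=
    congrArg (F i) (foldr_flatten_replicate F (j :: w) n x)
  have hmem (n : ℕ) : (hT n).fixedPoint _ ∈ fixedPtsOfComps F :=
    ⟨_, List.cons_ne_nil _ _, (hT n).fixedPoint_isFixedPt⟩
  have hy : Tendsto (fun n => T n (F i p)) atTop (𝓝 (F i p)) := by
    simpa only [hTA, comp_def] using ((hF i).2.continuous.tendsto p).comp
      ((contractingWith_foldr_cons hF j w).tendsto_iterate_of_isFixedPt hp (F i p))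
  exact mem_closure_of_tendsto
    (tendsto_of_isFixedPt_of_tendsto_apply hT (fun n => (hT n).fixedPoint_isFixedPt) hy)
    (Eventually.of_forall hmem)

end FixedPtsOfComps

theorem closure_fixedPts_invariant
    {X : Type*} [MetricSpace X] [CompleteSpace X]
    (F : ℕ → X → X) (hF : ∀ i, ∃ r : NNReal, ContractingWith r (F i)) :
    closure (fixedPtsOfComps F) =
      closure (⋃ i : ℕ, F i '' closure (fixedPtsOfComps F)) := by
  choose K hK using hF
  refine subset_antisymm (closure_mono ?_)
    (closure_minimal (iUnion_subset fun i => ?_) isClosed_closure)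
  · exact (fixedPtsOfComps_subset_iUnion_image F).trans
      (iUnion_mono fun i => image_mono subset_closure)
  · calc F i '' closure (fixedPtsOfComps F)
        ⊆ closure (F i '' fixedPtsOfComps F) :=
          image_closure_subset_closure_image (hK i).2.continuous
      _ ⊆ closure (fixedPtsOfComps F) :=
          closure_minimal (image_fixedPtsOfComps_subset_closure hK i) isClosed_closure
end

section
/- Let F = {F_i : i ∈ ℕ} be a countable family of contraction maps on a complete metric space (X,d). If there exists a bounded invariant set for F, then the set D of fixed points of the maps F_i is bounded. -/
/-!
Every invariant set `E` is closed and mapped into itself by each `F i`. Since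
`dist (f^[n] e) y ≤ K ^ n * dist e y` for a fixed point `y` of a `K`-contraction `f`, the
iterates of `f` converge to `y` from any starting point `e`, so starting in `E` shows that
each fixed point `x i` lies in `E`; hence `range x ⊆ E` is bounded.
-/

open Metric Set

/-- A nonempty set `E` is invariant for the family `F` if `E = cl(⋃ i, F i '' E)`. -/
def IsInvariantSet {X : Type*} [TopologicalSpace X] (F : ℕ → X → X) (E : Set X) : Prop :=
  E.Nonempty ∧ E = closure (⋃ i : ℕ, F i '' E)

open Function Filter Topology

namespace IsInvariantSet

variable {X : Type*} [TopologicalSpace X] {F : ℕ → X → X} {E : Set X}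

theorem isClosed (hE : IsInvariantSet F E) : IsClosed E :=
  hE.2 ▸ isClosed_closure

theorem mapsTo (hE : IsInvariantSet F E) (i : ℕ) : MapsTo (F i) E E := fun _ hy =>
  hE.2 ▸ subset_closure (mem_iUnion.2 ⟨i, mem_image_of_mem _ hy⟩)

end IsInvariantSet

namespace ContractingWith

variable {α : Type*} [MetricSpace α] {K : NNReal} {f : α → α}

theorem tendsto_iterate_of_isFixedPt_s3 (hf : ContractingWith K f) {y : α} (hy : IsFixedPt f y)
    (x : α) : Tendsto (fun n => f^[n] x) atTop (𝓝 y) := by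
  have hdist : ∀ n, dist (f^[n] x) y ≤ K ^ n * dist x y := fun n => by
    simpa only [(hy.iterate n).eq, NNReal.coe_pow] using
      (hf.toLipschitzWith.iterate n).dist_le_mul x y
  have hgeom : Tendsto (fun n => (K : ℝ) ^ n * dist x y) atTop (𝓝 0) := by
    simpa only [zero_mul] using (tendsto_pow_atTop_nhds_zero_of_lt_one K.coe_nonneg
      (NNReal.coe_lt_one.2 hf.1)).mul_const (dist x y)
  exact tendsto_iff_dist_tendsto_zero.2 (squeeze_zero (fun _ => dist_nonneg) hdist hgeom)

theorem mem_of_isFixedPt (hf : ContractingWith K f) {y : α} (hy : IsFixedPt f y) {s : Set α}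
    (hs : IsClosed s) (hsf : MapsTo f s s) (hne : s.Nonempty) : y ∈ s :=
  let ⟨x, hx⟩ := hne
  hs.mem_of_tendsto (hf.tendsto_iterate_of_isFixedPt_s3 hy x) (Eventually.of_forall (hsf.iterate · hx))

end ContractingWith

theorem bounded_invariant_set_implies_bounded_fixed_points_general
    {X : Type*} [MetricSpace X]
    (F : ℕ → X → X) (hF : ∀ i, ∃ r : NNReal, ContractingWith r (F i))
    (x : ℕ → X) (hx : ∀ i, F i (x i) = x i)
    (hE : ∃ E : Set X, IsInvariantSet F E ∧ Bornology.IsBounded E) :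
    Bornology.IsBounded (Set.range x) := by
  obtain ⟨E, hinv, hbdd⟩ := hE
  refine hbdd.subset (range_subset_iff.2 fun i => ?_)
  obtain ⟨r, hr⟩ := hF i
  exact hr.mem_of_isFixedPt (hx i) hinv.isClosed (hinv.mapsTo i) hinv.1

theorem bounded_invariant_set_implies_bounded_fixed_points
    {X : Type*} [MetricSpace X] [CompleteSpace X]
    (F : ℕ → X → X) (hF : ∀ i, ∃ r : NNReal, ContractingWith r (F i))
    (x : ℕ → X) (hx : ∀ i, F i (x i) = x i)
    (hE : ∃ E : Set X, IsInvariantSet F E ∧ Bornology.IsBounded E) :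
    Bornology.IsBounded (Set.range x) :=
  bounded_invariant_set_implies_bounded_fixed_points_general F hF x hx hE
end

section
/- For each i ∈ ℕ (i ≥ 1), define F_i : ℝ → ℝ by F_i(x) = (i/(i+1))x + 1/(i+1)². Then each F_i is a contraction with fixed point 1/(i+1), sup_i Lip(F_i) = 1, and for every a ≤ 0 and b ≥ 1/2 the closed interval [a,b] satisfies F_i([a,b]) ⊆ [a,b] for all i; in particular [0,1/2] is a bounded invariant set for the family {F_i}. -/
open Metric Set

theorem example_sup_one_bounded_invariant
    (F : ℕ → ℝ → ℝ)
    (hF : ∀ i : ℕ, ∀ x : ℝ, F i x = ((i : ℝ) / (i + 1)) * x + 1 / ((i + 1) ^ 2)) :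
    (∀ i : ℕ, 1 ≤ i → ∀ x y : ℝ, |F i x - F i y| ≤ ((i : ℝ) / (i + 1)) * |x - y|) ∧
    (∀ i : ℕ, 1 ≤ i → F i (1 / ((i : ℝ) + 1)) = 1 / ((i : ℝ) + 1)) ∧
    (⨆ i : ℕ, (i : ℝ) / (i + 1)) = 1 ∧
    (∀ a b : ℝ, a ≤ 0 → 1 / 2 ≤ b →
      ∀ i : ℕ, 1 ≤ i → F i '' Set.Icc a b ⊆ Set.Icc a b) ∧
    Set.Icc (0 : ℝ) (1 / 2) =
      closure (⋃ i ∈ {i : ℕ | 1 ≤ i}, F i '' Set.Icc (0 : ℝ) (1 / 2)) := by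
  have ht1 : ∀ i : ℕ, (0 : ℝ) < (i : ℝ) + 1 := fun i => by positivity
  refine ⟨?_, ?_, ?_, ?_, ?_⟩
  · intro i _ x y
    rw [hF, hF]
    have : ((i : ℝ) / (i + 1)) * x + 1 / ((i + 1) ^ 2) -
        (((i : ℝ) / (i + 1)) * y + 1 / ((i + 1) ^ 2)) = ((i : ℝ) / (i + 1)) * (x - y) := by
      ring
    rw [this, abs_mul, abs_of_nonneg (by positivity : (0:ℝ) ≤ (i : ℝ) / (i + 1))]
  · intro i _
    rw [hF]
    have h := (ht1 i).ne'
    field_simp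
  · have hmono : Monotone (fun i : ℕ => (i : ℝ) / (i + 1)) := by
      intro i j hij
      have hij' : (i : ℝ) ≤ j := Nat.cast_le.2 hij
      rw [div_le_div_iff₀ (ht1 i) (ht1 j)]
      nlinarith
    have htend : Filter.Tendsto (fun i : ℕ => (i : ℝ) / (i + 1)) Filter.atTop (nhds 1) :=
      tendsto_natCast_div_add_atTop (1 : ℝ)
    exact (isLUB_of_tendsto_atTop hmono htend).ciSup_eq
  · intro a b ha hb i hi
    rintro _ ⟨x, ⟨hx1, hx2⟩, rfl⟩
    rw [hF]
    have hti : (1 : ℝ) ≤ (i : ℝ) := by exact_mod_cast hi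
    set t : ℝ := (i : ℝ)
    have h1 : (0 : ℝ) < t + 1 := ht1 i
    have he : t / (t + 1) * x + 1 / (t + 1) ^ 2 = (t * x * (t + 1) + 1) / (t + 1) ^ 2 := by
      field_simp
    constructor
    · rw [he, le_div_iff₀ (by positivity)]
      nlinarith [mul_nonneg (mul_nonneg (by linarith : (0:ℝ) ≤ t) (by linarith : (0:ℝ) ≤ x - a)) h1.le]
    · rw [he, div_le_iff₀ (by positivity)]
      nlinarith [mul_nonneg (mul_nonneg (by linarith : (0:ℝ) ≤ t) (by linarith : (0:ℝ) ≤ b - x)) h1.le]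
  · have hUsub : (⋃ i ∈ {i : ℕ | 1 ≤ i}, F i '' Set.Icc (0 : ℝ) (1 / 2)) ⊆
        Set.Icc (0 : ℝ) (1 / 2) := by
      intro x hx
      simp only [Set.mem_iUnion] at hx
      obtain ⟨i, hi, hxi⟩ := hx
      -- reuse part 4 argument
      obtain ⟨y, ⟨hy1, hy2⟩, rfl⟩ := hxi
      rw [hF]
      have hti : (1 : ℝ) ≤ (i : ℝ) := by exact_mod_cast hi
      set t : ℝ := (i : ℝ)
      have h1 : (0 : ℝ) < t + 1 := ht1 i
      have he : t / (t + 1) * y + 1 / (t + 1) ^ 2 = (t * y * (t + 1) + 1) / (t + 1) ^ 2 := by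
        field_simp
      constructor
      · rw [he, le_div_iff₀ (by positivity)]
        nlinarith [mul_nonneg (mul_nonneg (by linarith : (0:ℝ) ≤ t) hy1) h1.le]
      · rw [he, div_le_iff₀ (by positivity)]
        nlinarith [mul_nonneg (mul_nonneg (by linarith : (0:ℝ) ≤ t)
          (by linarith : (0:ℝ) ≤ 1/2 - y)) h1.le]
    apply le_antisymm
    · -- Icc ⊆ closure U : via Ioc ⊆ U
      have hIoc : Set.Ioc (0 : ℝ) (1 / 2) ⊆
          (⋃ i ∈ {i : ℕ | 1 ≤ i}, F i '' Set.Icc (0 : ℝ) (1 / 2)) := by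
        rintro x ⟨hx0, hx2⟩
        simp only [Set.mem_iUnion, Set.mem_setOf_eq]
        by_cases hcase : x ≤ 7 / 16
        · obtain ⟨n, hn⟩ := exists_nat_gt (1 / x)
          refine ⟨max n 1, le_max_right _ _, ?_⟩
          set i := max n 1
          have hti : (1 : ℝ) ≤ (i : ℝ) := by exact_mod_cast le_max_right n 1
          set t : ℝ := (i : ℝ) with htdef
          have h1 : (0 : ℝ) < t + 1 := by linarith
          have hnt : (n : ℝ) ≤ t := by
            rw [htdef]; exact_mod_cast le_max_left n 1
          have hlow : 1 / (t + 1) ^ 2 ≤ x := by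
            have hn' : 1 / x < t + 1 := by
              calc 1 / x < (n : ℝ) := hn
                _ ≤ t + 1 := by linarith
            have h2 : 1 < x * (t + 1) := by
              rw [div_lt_iff₀ hx0] at hn'; linarith
            rw [div_le_iff₀ (by positivity)]
            nlinarith
          refine ⟨(t + 1) / t * (x - 1 / (t + 1) ^ 2), ⟨?_, ?_⟩, ?_⟩
          · have : 0 ≤ x - 1 / (t + 1) ^ 2 := by linarith
            positivity
          · rw [div_mul_eq_mul_div, div_le_iff₀ (by linarith : (0:ℝ) < t)]
            have hsub : (t + 1) * (x - 1 / (t + 1) ^ 2) =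
                ((t + 1) * x - 1 / (t + 1)) := by field_simp
            rw [hsub]
            have h3 : 1 / 2 * t - ((t + 1) * x - 1 / (t + 1)) =
                (t / 2 * (t + 1) ^ 2 - (t + 1) ^ 3 * x + (t + 1)) / (t + 1) ^ 2 := by
              field_simp; ring
            have h4 : 0 ≤ t / 2 * (t + 1) ^ 2 - (t + 1) ^ 3 * x + (t + 1) := by
              nlinarith [mul_nonneg (pow_nonneg h1.le 3) (by linarith : (0:ℝ) ≤ 7/16 - x),
                mul_nonneg h1.le (sq_nonneg (t - 3))]
            nlinarith [div_nonneg h4 (by positivity : (0:ℝ) ≤ (t+1)^2)]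
          · rw [hF]
            have ht0 : t ≠ 0 := by linarith
            have ht1' : t + 1 ≠ 0 := by linarith
            field_simp
            ring
        · refine ⟨1, le_refl 1, 2 * x - 1 / 2, ⟨by linarith, by linarith⟩, ?_⟩
          rw [hF]
          norm_num
          ring
      calc Set.Icc (0 : ℝ) (1 / 2) = closure (Set.Ioc (0 : ℝ) (1 / 2)) := by
            rw [closure_Ioc (by norm_num : (0:ℝ) ≠ 1/2)]
        _ ⊆ _ := closure_mono hIoc
    · exact closure_minimal hUsub isClosed_Icc
end

section
/- Let F = {F_i : i ∈ ℕ} be a countable family of contraction maps on ℝ, each F_i being non-decreasing. If the set D of fixed points of the maps F_i is bounded, then there exists a bounded invariant set for F; indeed the interval I = [inf D, sup D] satisfies F_i(I) ⊆ I for all i, and consequently the closure of the set of fixed points of finite compositions of members of F is a bounded invariant set. -/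
/-!
Let `a = inf D` and `b = sup D`. A monotone nonexpansive map with a fixed point `p ∈ [a, b]`
maps `[a, b]` into itself: `|F a - p| ≤ p - a` forces `a ≤ F a`, and symmetrically at `b`.
Every nonempty composition `g` of the `F i` is then a contraction of `[a, b]`, so its fixed point
lies in `[a, b]`.

Invariance of the closure `E` of these fixed points holds for any countable family of
contractions of a complete metric space. If `g z = z`, then `z = F i (g z)` with `g z` fixed by
`g ∘ F i`, so `E ⊆ cl ⋃ F i '' E`. Conversely, `F i z` is moved by the contraction `F i ∘ g^[n]`
only by `K_n · dist z (F i z)`, where `K_n → 0` is its constant, so the fixed points of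
`F i ∘ g^[n]` converge to `F i z`, giving `F i '' E ⊆ E`.
-/

open Metric Set

open Function Filter Topology

namespace ContractingFamily

variable {X : Type*} (F : ℕ → X → X)

def listComp (l : List ℕ) : X → X := fun y => l.foldr (fun i y => F i y) y

theorem listComp_cons (i : ℕ) (l : List ℕ) : listComp F (i :: l) = F i ∘ listComp F l := rfl

theorem listComp_append (l₁ l₂ : List ℕ) :
    listComp F (l₁ ++ l₂) = listComp F l₁ ∘ listComp F l₂ := by
  funext y
  simp [listComp, List.foldr_append]

theorem listComp_flatten_replicate (l : List ℕ) (n : ℕ) :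
    listComp F (List.replicate n l).flatten = (listComp F l)^[n] := by
  induction n with
  | zero => rfl
  | succ n ih => rw [List.replicate_succ, List.flatten_cons, listComp_append, ih, iterate_succ']

theorem mapsTo_listComp {s : Set X} (hF : ∀ i, MapsTo (F i) s s) (l : List ℕ) :
    MapsTo (listComp F l) s s := by
  induction l with
  | nil => exact mapsTo_id s
  | cons i l ih => exact (hF i).comp ih

theorem fixedPtsOfComps_subset_iUnion_image :
    fixedPtsOfComps F ⊆ ⋃ i, F i '' fixedPtsOfComps F := by
  rintro z ⟨_ | ⟨i, l⟩, hl, hz⟩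
  · exact absurd rfl hl
  · have hz : F i (listComp F l z) = z := hz
    refine mem_iUnion.2 ⟨i, listComp F l z, ⟨l ++ [i], by simp, ?_⟩, hz⟩
    change listComp F (l ++ [i]) (listComp F l z) = listComp F l z
    rw [listComp_append]
    exact congrArg (listComp F l) hz

section Contracting

variable [MetricSpace X] {F} {r : ℕ → NNReal}

theorem lipschitzWith_listComp (hF : ∀ i, LipschitzWith (r i) (F i)) (l : List ℕ) :
    LipschitzWith (l.map r).prod (listComp F l) := by
  induction l with
  | nil => exact LipschitzWith.id
  | cons i l ih =>
    rw [List.map_cons, List.prod_cons, listComp_cons]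
    exact (hF i).comp ih

theorem contractingWith_listComp (hF : ∀ i, ContractingWith (r i) (F i)) {l : List ℕ}
    (hl : l ≠ []) : ContractingWith (l.map r).prod (listComp F l) := by
  refine ⟨?_, lipschitzWith_listComp (fun i => (hF i).2) l⟩
  obtain ⟨i, l, rfl⟩ := List.exists_cons_of_ne_nil hl
  rw [List.map_cons, List.prod_cons]
  refine mul_lt_one_of_nonneg_of_lt_one_left bot_le (hF i).1 ?_
  refine (List.prod_le_pow_card _ 1 fun _ hk => ?_).trans_eq (one_pow _)
  obtain ⟨j, -, rfl⟩ := List.mem_map.1 hk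
  exact (hF j).1.le

variable [CompleteSpace X]

theorem fixedPtsOfComps_subset (hF : ∀ i, ContractingWith (r i) (F i)) {s : Set X}
    (hs : IsClosed s) (hs₀ : s.Nonempty) (hFs : ∀ i, MapsTo (F i) s s) :
    fixedPtsOfComps F ⊆ s := by
  rintro z ⟨l, hl, hz⟩
  obtain ⟨y, hy⟩ := hs₀
  have : Nonempty X := ⟨y⟩
  have hg := contractingWith_listComp hF hl
  rw [hg.fixedPoint_unique hz]
  exact hs.mem_of_tendsto (hg.tendsto_iterate_fixedPoint y)
    (Eventually.of_forall fun n => ((mapsTo_listComp F hFs l).iterate n) hy)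

theorem image_fixedPtsOfComps_subset_closure (hF : ∀ i, ContractingWith (r i) (F i)) (i : ℕ) :
    F i '' fixedPtsOfComps F ⊆ closure (fixedPtsOfComps F) := by
  rintro _ ⟨z, ⟨l, hl, hz : IsFixedPt (listComp F l) z⟩, rfl⟩
  have : Nonempty X := ⟨z⟩
  set g := listComp F l
  set q := (l.map r).prod
  have hg : ContractingWith q g := contractingWith_listComp hF hl
  set K : ℕ → NNReal := fun n => r i * q ^ n
  have hK n : ContractingWith (K n) (F i ∘ g^[n]) :=
    ⟨mul_lt_one_of_nonneg_of_lt_one_left bot_le (hF i).1 (pow_le_one₀ bot_le hg.1.le),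
      (hF i).2.comp (hg.2.iterate n)⟩
  set w : ℕ → X := fun n => ContractingWith.fixedPoint _ (hK n)
  have hw n : w n ∈ fixedPtsOfComps F := by
    refine ⟨i :: (List.replicate n l).flatten, List.cons_ne_nil _ _, ?_⟩
    change IsFixedPt (listComp F (i :: (List.replicate n l).flatten)) (w n)
    rw [listComp_cons, listComp_flatten_replicate]
    exact (hK n).fixedPoint_isFixedPt
  have hdist n : dist (F i z) (w n) ≤ K n * dist z (F i z) / (1 - K n) := by
    refine ((hK n).dist_fixedPoint_le _).trans
      (div_le_div_of_nonneg_right ?_ (hK n).one_sub_K_pos.le)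
    have hz_iter : (F i ∘ g^[n]) z = F i z := congrArg (F i) (hz.iterate n).eq
    have h := (hK n).dist_le_mul z (F i z)
    rwa [hz_iter] at h
  have hlim : Tendsto (fun n => K n * dist z (F i z) / (1 - K n)) atTop (𝓝 0) := by
    have hK_lim : Tendsto (fun n => (K n : ℝ)) atTop (𝓝 0) := by
      simpa [K] using (tendsto_pow_atTop_nhds_zero_of_lt_one q.coe_nonneg hg.1).const_mul (r i : ℝ)
    rw [show (0 : ℝ) = 0 * dist z (F i z) / (1 - 0) by simp]
    exact (hK_lim.mul_const _).div (tendsto_const_nhds.sub hK_lim) (by simp)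
  refine mem_closure_of_tendsto (b := atTop) (tendsto_iff_dist_tendsto_zero.2 ?_)
    (Eventually.of_forall hw)
  exact squeeze_zero (fun _ => dist_nonneg) (fun n => (dist_comm _ _).trans_le (hdist n)) hlim

theorem isInvariantSet_closure_fixedPtsOfComps [Nonempty X]
    (hF : ∀ i, ContractingWith (r i) (F i)) :
    IsInvariantSet F (closure (fixedPtsOfComps F)) := by
  refine ⟨⟨_, subset_closure ⟨[0], List.cons_ne_nil _ _, (hF 0).fixedPoint_isFixedPt⟩⟩, ?_⟩
  refine (closure_minimal ?_ isClosed_closure).antisymm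
    (closure_minimal (iUnion_subset fun i => ?_) isClosed_closure)
  · exact (fixedPtsOfComps_subset_iUnion_image F).trans
      (subset_closure.trans' (iUnion_mono fun i => image_mono subset_closure))
  · calc F i '' closure (fixedPtsOfComps F)
        ⊆ closure (F i '' fixedPtsOfComps F) :=
          image_closure_subset_closure_image (hF i).2.continuous
      _ ⊆ closure (fixedPtsOfComps F) :=
          closure_minimal (image_fixedPtsOfComps_subset_closure hF i) isClosed_closure

end Contracting

end ContractingFamily

theorem Monotone.mapsTo_Icc_of_lipschitzWith_one {f : ℝ → ℝ} (hf : Monotone f)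
    (hL : LipschitzWith 1 f) {a b p : ℝ} (hp : p ∈ Icc a b) (hfp : f p = p) :
    MapsTo f (Icc a b) (Icc a b) := by
  have hdist y : |f y - p| ≤ |y - p| := by
    simpa [Real.dist_eq, hfp] using hL.dist_le_mul y p
  have ha := hdist a
  have hb := hdist b
  rw [abs_of_nonpos (sub_nonpos.2 hp.1)] at ha
  rw [abs_of_nonneg (sub_nonneg.2 hp.2)] at hb
  intro y hy
  exact ⟨(by linarith [neg_abs_le (f a - p)] : a ≤ f a).trans (hf hy.1),
    (hf hy.2).trans (by linarith [le_abs_self (f b - p)])⟩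

theorem nondecreasing_bounded_fixed_points_implies_bounded_invariant
    (F : ℕ → ℝ → ℝ) (hF : ∀ i, ∃ r : NNReal, ContractingWith r (F i))
    (hmono : ∀ i, Monotone (F i))
    (x : ℕ → ℝ) (hx : ∀ i, F i (x i) = x i)
    (hD : Bornology.IsBounded (Set.range x)) :
    (∀ i, F i '' Set.Icc (sInf (Set.range x)) (sSup (Set.range x)) ⊆
        Set.Icc (sInf (Set.range x)) (sSup (Set.range x))) ∧
    Bornology.IsBounded (closure (fixedPtsOfComps F)) ∧
    IsInvariantSet F (closure (fixedPtsOfComps F)) := by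
  choose r hr using hF
  set I := Icc (sInf (range x)) (sSup (range x))
  have hx_mem i : x i ∈ I := ⟨csInf_le hD.bddBelow ⟨i, rfl⟩, le_csSup hD.bddAbove ⟨i, rfl⟩⟩
  have hF_I i : MapsTo (F i) I I :=
    (hmono i).mapsTo_Icc_of_lipschitzWith_one ((hr i).2.weaken (hr i).1.le) (hx_mem i) (hx i)
  have hsub : closure (fixedPtsOfComps F) ⊆ I := closure_minimal
    (ContractingFamily.fixedPtsOfComps_subset hr isClosed_Icc ⟨x 0, hx_mem 0⟩ hF_I) isClosed_Icc
  exact ⟨fun i => (hF_I i).image_subset, (isBounded_Icc _ _).subset hsub,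
    ContractingFamily.isInvariantSet_closure_fixedPtsOfComps hr⟩
end

section
/- For i ∈ ℕ (i ≥ 1), define F_i(x) = −(i/(i+1))x + (2i+1)/i and G_i(x) = −(i/(i+1))x + 1/(i+1) on ℝ. Then the fixed point of G_i ∘ F_i is y_i = −2i(i+1)/(2i+1) and the fixed point of F_i ∘ G_i is z_i = (−i² + (i+1)²(2i+1))/(i(2i+1)); in particular the sequences (y_i) and (z_i) are unbounded, while all fixed points of the individual maps F_i and G_i lie in [0,2]. -/
open Metric Set

theorem example_unbounded_fixed_points_of_compositions
    (F G : ℕ → ℝ → ℝ)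
    (hF : ∀ i : ℕ, 1 ≤ i → ∀ x : ℝ, F i x = -((i : ℝ) / (i + 1)) * x + (2 * i + 1) / i)
    (hG : ∀ i : ℕ, 1 ≤ i → ∀ x : ℝ, G i x = -((i : ℝ) / (i + 1)) * x + 1 / (i + 1)) :
    (∀ i : ℕ, 1 ≤ i →
      G i (F i (-(2 * (i : ℝ) * (i + 1)) / (2 * i + 1))) = -(2 * (i : ℝ) * (i + 1)) / (2 * i + 1)) ∧
    (∀ i : ℕ, 1 ≤ i →
      F i (G i ((-(i : ℝ) ^ 2 + (i + 1) ^ 2 * (2 * i + 1)) / (i * (2 * i + 1)))) =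
        (-(i : ℝ) ^ 2 + (i + 1) ^ 2 * (2 * i + 1)) / (i * (2 * i + 1))) ∧
    ¬ Bornology.IsBounded {y : ℝ | ∃ i : ℕ, 1 ≤ i ∧ y = -(2 * (i : ℝ) * (i + 1)) / (2 * i + 1)} ∧
    ¬ Bornology.IsBounded {z : ℝ | ∃ i : ℕ, 1 ≤ i ∧
        z = (-(i : ℝ) ^ 2 + (i + 1) ^ 2 * (2 * i + 1)) / (i * (2 * i + 1))} ∧
    (∀ i : ℕ, 1 ≤ i → ∀ x : ℝ, F i x = x → x ∈ Set.Icc (0 : ℝ) 2) ∧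
    (∀ i : ℕ, 1 ≤ i → ∀ x : ℝ, G i x = x → x ∈ Set.Icc (0 : ℝ) 2) := by
  have key : ∀ i : ℕ, 1 ≤ i → (1 : ℝ) ≤ (i : ℝ) := by
    intro i hi; exact_mod_cast hi
  refine ⟨?_, ?_, ?_, ?_, ?_, ?_⟩
  · intro i hi
    have h1 := key i hi
    rw [hF i hi, hG i hi]
    have h2 : (i : ℝ) ≠ 0 := by linarith
    have h3 : (i : ℝ) + 1 ≠ 0 := by linarith
    have h4 : 2 * (i : ℝ) + 1 ≠ 0 := by linarith
    field_simp
    ring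
  · intro i hi
    have h1 := key i hi
    rw [hG i hi, hF i hi]
    have h2 : (i : ℝ) ≠ 0 := by linarith
    have h3 : (i : ℝ) + 1 ≠ 0 := by linarith
    have h4 : 2 * (i : ℝ) + 1 ≠ 0 := by linarith
    field_simp
    ring
  · intro hb
    obtain ⟨r, hr⟩ := (isBounded_iff_forall_norm_le).mp hb
    obtain ⟨i, hi⟩ := exists_nat_gt r
    set j := i + 1 with hj
    have hj1 : 1 ≤ j := Nat.le_add_left 1 i
    have h1 := key j hj1
    have hjr : r < (j : ℝ) := by
      have : (i : ℝ) ≤ (j : ℝ) := by exact_mod_cast Nat.le_succ i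
      linarith
    have hmem : -(2 * (j : ℝ) * (j + 1)) / (2 * j + 1) ∈
        {y : ℝ | ∃ i : ℕ, 1 ≤ i ∧ y = -(2 * (i : ℝ) * (i + 1)) / (2 * i + 1)} :=
      ⟨j, hj1, rfl⟩
    have := hr _ hmem
    have h4 : (0:ℝ) < 2 * (j : ℝ) + 1 := by linarith
    have hge : (j : ℝ) ≤ ‖-(2 * (j : ℝ) * (j + 1)) / (2 * j + 1)‖ := by
      rw [Real.norm_eq_abs, abs_div, abs_of_pos h4, abs_neg,
        abs_of_pos (by nlinarith : (0:ℝ) < 2 * (j : ℝ) * (j + 1)),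
        le_div_iff₀ h4]
      nlinarith
    linarith
  · intro hb
    obtain ⟨r, hr⟩ := (isBounded_iff_forall_norm_le).mp hb
    obtain ⟨i, hi⟩ := exists_nat_gt r
    set j := i + 1 with hj
    have hj1 : 1 ≤ j := Nat.le_add_left 1 i
    have h1 := key j hj1
    have hjr : r < (j : ℝ) := by
      have : (i : ℝ) ≤ (j : ℝ) := by exact_mod_cast Nat.le_succ i
      linarith
    have hmem : (-(j : ℝ) ^ 2 + (j + 1) ^ 2 * (2 * j + 1)) / (j * (2 * j + 1)) ∈
        {z : ℝ | ∃ i : ℕ, 1 ≤ i ∧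
          z = (-(i : ℝ) ^ 2 + (i + 1) ^ 2 * (2 * i + 1)) / (i * (2 * i + 1))} :=
      ⟨j, hj1, rfl⟩
    have := hr _ hmem
    have h4 : (0:ℝ) < (j : ℝ) * (2 * j + 1) := by nlinarith
    have hnum : (0:ℝ) < -(j : ℝ) ^ 2 + (j + 1) ^ 2 * (2 * j + 1) := by nlinarith
    have hge : (j : ℝ) ≤ ‖(-(j : ℝ) ^ 2 + (j + 1) ^ 2 * (2 * j + 1)) / (j * (2 * j + 1))‖ := by
      rw [Real.norm_eq_abs, abs_div, abs_of_pos h4, abs_of_pos hnum, le_div_iff₀ h4]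
      nlinarith
    linarith
  · intro i hi x hx
    have h1 := key i hi
    rw [hF i hi] at hx
    have h2 : (i : ℝ) ≠ 0 := by linarith
    have h3 : (i : ℝ) + 1 ≠ 0 := by linarith
    field_simp at hx
    have hxval : x = ((i : ℝ) + 1) / i := by
      rw [eq_div_iff h2]; nlinarith
    constructor
    · rw [hxval]; positivity
    · rw [hxval, div_le_iff₀ (by linarith)]; linarith
  · intro i hi x hx
    have h1 := key i hi
    rw [hG i hi] at hx
    have h3 : (i : ℝ) + 1 ≠ 0 := by linarith
    field_simp at hx
    have hxval : x = 1 / (2 * (i : ℝ) + 1) := by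
      rw [eq_div_iff (by linarith : 2 * (i : ℝ) + 1 ≠ 0)]; nlinarith
    constructor
    · rw [hxval]; positivity
    · rw [hxval, div_le_iff₀ (by linarith)]; linarith
end

section
/- Let F = {F_i : i ∈ ℕ} be a countable family of contractive similarities on ℝ (|F_i(x) − F_i(y)| = r_i|x − y| for all x,y, with 0 < r_i < 1) with sup_i r_i = 1. If there exists a bounded invariant set A for F, then there exists α > 0 such that the closure of the α-enlargement A_α is also an invariant set for F. In particular the bounded invariant set is not unique. -/
set_option maxHeartbeats 1000000

open Metric Set

lemma affine_of_sim (f : ℝ → ℝ) (r : ℝ)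
    (h : ∀ x y : ℝ, |f x - f y| = r * |x - y|) :
    ∀ x : ℝ, f x = f 0 + (f 1 - f 0) * x := by
  intro x
  have e1 : (f x - f 0) ^ 2 = r ^ 2 * x ^ 2 := by
    have h0 := h x 0
    have h2 : |f x - f 0| ^ 2 = (r * |x - 0|) ^ 2 := by rw [h0]
    simpa [sq_abs, mul_pow, sub_zero] using h2
  have e2 : (f 1 - f 0) ^ 2 = r ^ 2 := by
    have h0 := h 1 0
    have h2 : |f 1 - f 0| ^ 2 = (r * |(1:ℝ) - 0|) ^ 2 := by rw [h0]
    simpa [sq_abs, mul_pow, sub_zero] using h2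
  have e3 : (f x - f 1) ^ 2 = r ^ 2 * (x - 1) ^ 2 := by
    have h0 := h x 1
    have h2 : |f x - f 1| ^ 2 = (r * |x - 1|) ^ 2 := by rw [h0]
    simpa [sq_abs, mul_pow] using h2
  have huv : (f x - f 0) * (f 1 - f 0) = r ^ 2 * x := by
    linear_combination (e1 + e2 - e3) / 2
  have hsq : (f x - f 0 - (f 1 - f 0) * x) ^ 2 = 0 := by
    linear_combination e1 - 2 * x * huv + x ^ 2 * e2
  have := pow_eq_zero_iff (n := 2) (by norm_num) |>.mp hsq
  linarith

theorem enlargement_invariant_of_sup_one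
    (F : ℕ → ℝ → ℝ) (r : ℕ → ℝ) (hr : ∀ i, 0 < r i ∧ r i < 1)
    (hsim : ∀ i, ∀ x y : ℝ, |F i x - F i y| = r i * |x - y|)
    (hsup : (⨆ i, r i) = 1)
    (A : Set ℝ) (hA : IsInvariantSet F A) (hAb : Bornology.IsBounded A) :
    ∃ α > (0 : ℝ), IsInvariantSet F (closure (Metric.thickening α A)) ∧
      closure (Metric.thickening α A) ≠ A := by
  obtain ⟨hAne, hAeq⟩ := hA
  have hAcl : IsClosed A := by rw [hAeq]; exact isClosed_closure
  have h2 : closure (⋃ i, F i '' A) ⊆ A := le_of_eq hAeq.symm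
  have hFA : ∀ i, ∀ a ∈ A, F i a ∈ A := by
    intro i a ha
    exact h2 (subset_closure (mem_iUnion.2 ⟨i, mem_image_of_mem _ ha⟩))
  have hbb := hAb.bddBelow
  have hba := hAb.bddAbove
  set m : ℝ := sInf A with hm
  set M : ℝ := sSup A with hM
  have hmA : m ∈ A := hAcl.csInf_mem hAne hbb
  have hMA : M ∈ A := hAcl.csSup_mem hAne hba
  have hsub : ∀ a ∈ A, m ≤ a ∧ a ≤ M := fun a ha => ⟨csInf_le hbb ha, le_csSup hba ha⟩
  have hmM : m ≤ M := (hsub m hmA).2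
  set α : ℝ := (M - m) + 1 with hα'
  have hα : 0 < α := by simp only [hα']; linarith
  have haff : ∀ i, ∀ x : ℝ, F i x = F i 0 + (F i 1 - F i 0) * x :=
    fun i => affine_of_sim (F i) (r i) (hsim i)
  have habs : ∀ i, |F i 1 - F i 0| = r i := by intro i; simpa using hsim i 1 0
  have hthick : thickening α A = Ioo (m - α) (M + α) := by
    ext x
    rw [mem_thickening_iff, mem_Ioo]
    constructor
    · rintro ⟨a, ha, hd⟩
      rw [Real.dist_eq] at hd
      obtain ⟨h1, h2⟩ := hsub a ha
      obtain ⟨h3, h4⟩ := abs_lt.mp hd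
      constructor <;> linarith
    · rintro ⟨h1, h2⟩
      rcases le_total x M with h | h
      · exact ⟨m, hmA, by rw [Real.dist_eq, abs_lt]; constructor <;> linarith⟩
      · exact ⟨M, hMA, by rw [Real.dist_eq, abs_lt]; constructor <;> linarith⟩
  have hclos : closure (thickening α A) = Icc (m - α) (M + α) := by
    rw [hthick, closure_Ioo (by linarith : m - α ≠ M + α)]
  refine ⟨α, hα, ⟨?_, ?_⟩, ?_⟩
  · rw [hclos]
    exact ⟨m, mem_Icc.2 ⟨by linarith, by linarith⟩⟩
  · rw [hclos]
    apply Subset.antisymm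
    · -- dense coverage: Icc ⊆ closure (⋃ F i '' Icc)
      intro t ht
      rw [mem_Icc] at ht
      rw [Metric.mem_closure_iff]
      intro ε hε
      set δ : ℝ := min (ε / 2) (α / 2) with hδ'
      have hδ0 : 0 < δ := lt_min (by linarith) (by linarith)
      have hδε : δ ≤ ε / 2 := min_le_left _ _
      have hδα : δ ≤ α / 2 := min_le_right _ _
      have hda : 0 < (M - m) + α := by linarith
      have h1 : (1 : ℝ) - δ / ((M - m) + α) < ⨆ i, r i := by
        rw [hsup]
        have : 0 < δ / ((M - m) + α) := div_pos hδ0 hda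
        linarith
      obtain ⟨j, hj⟩ := exists_lt_of_lt_ciSup h1
      obtain ⟨hrj0, hrj1⟩ := hr j
      set η : ℝ := (1 - r j) * ((M - m) + α) with hη'
      have hηδ : η < δ := by
        have hlt : 1 - r j < δ / ((M - m) + α) := by linarith
        calc η = (1 - r j) * ((M - m) + α) := hη'
          _ < δ / ((M - m) + α) * ((M - m) + α) := mul_lt_mul_of_pos_right hlt hda
          _ = δ := div_mul_cancel₀ _ (ne_of_gt hda)
      have hη0 : 0 ≤ η := mul_nonneg (by linarith) (le_of_lt hda)
      -- expanded form of η
      have hηe : η = (M - m + α) - (r j * M - r j * m) - r j * α := by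
        rw [hη']; ring
      have hord : m - α + η ≤ M + α - η := by linarith
      set z : ℝ := max (m - α + η) (min t (M + α - η)) with hz'
      have hz1 : m - α + η ≤ z := le_max_left _ _
      have hz2 : z ≤ M + α - η := max_le hord (min_le_right _ _)
      have htz : |t - z| ≤ η := by
        rw [abs_le]
        rcases le_total t (m - α + η) with h | h
        · have hzt : z = m - α + η := by
            rw [hz', min_eq_left (by linarith), max_eq_left h]
          rw [hzt]
          constructor <;> linarith [ht.1]
        · rcases le_total t (M + α - η) with h' | h'
          · have hzt : z = t := by rw [hz', min_eq_left h', max_eq_right h]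
            rw [hzt]; constructor <;> linarith
          · have hzt : z = M + α - η := by rw [hz', min_eq_right h', max_eq_right hord]
            rw [hzt]; constructor <;> linarith [ht.2]
      set s : ℝ := F j 1 - F j 0 with hs'
      have hsabs : |s| = r j := habs j
      have hsne : s ≠ 0 := by
        intro h
        rw [h, abs_zero] at hsabs
        linarith
      obtain ⟨hb1, hb2⟩ := hsub _ (hFA j m hmA)
      obtain ⟨hb3, hb4⟩ := hsub _ (hFA j M hMA)
      have hE1 : F j m = F j 0 + s * m := haff j m
      have hE2 : F j M = F j 0 + s * M := haff j M
      set x : ℝ := (z - F j 0) / s with hx'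
      have hFx : F j x = z := by
        rw [haff j x, ← hs', hx', mul_div_cancel₀ _ hsne]
        ring
      have hxI : x ∈ Icc (m - α) (M + α) := by
        rw [mem_Icc, hx']
        rcases lt_or_gt_of_ne hsne with hneg | hpos
        · have hs2 : s = -(r j) := by
            rw [abs_of_neg hneg] at hsabs; linarith
          rw [hs2] at hE1 hE2
          constructor
          · rw [le_div_iff_of_neg (by rw [hs2]; linarith : s < 0), hs2]
            linarith [hz2, hηe, hE1, hE2, hb3]
          · rw [div_le_iff_of_neg (by rw [hs2]; linarith : s < 0), hs2]
            linarith [hz1, hηe, hE1, hb2]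
        · have hs2 : s = r j := by
            rw [abs_of_pos hpos] at hsabs; linarith
          rw [hs2] at hE1 hE2
          constructor
          · rw [le_div_iff₀ (by rw [hs2]; exact hrj0 : 0 < s), hs2]
            linarith [hz1, hηe, hE1, hE2, hb4]
          · rw [div_le_iff₀ (by rw [hs2]; exact hrj0 : 0 < s), hs2]
            linarith [hz2, hηe, hE1, hb1]
      refine ⟨F j x, mem_iUnion.2 ⟨j, ⟨x, hxI, rfl⟩⟩, ?_⟩
      rw [Real.dist_eq, hFx]
      calc |t - z| ≤ η := htz
        _ < ε := by linarith
    · -- contraction: each image stays inside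
      refine closure_minimal (iUnion_subset fun i => ?_) isClosed_Icc
      rintro _ ⟨x, hx, rfl⟩
      rw [mem_Icc] at hx ⊢
      obtain ⟨hrj0, hrj1⟩ := hr i
      rcases le_total x ((m + M) / 2) with h | h
      · have h1 : |x - m| ≤ α := by rw [abs_le]; constructor <;> linarith [hx.1, hx.2]
        have h4 : r i * |x - m| ≤ α := by
          have := mul_le_mul hrj1.le h1 (abs_nonneg _) zero_le_one
          linarith
        have h5 : |F i x - F i m| ≤ α := by rw [hsim i x m]; exact h4
        rw [abs_le] at h5
        obtain ⟨hc1, hc2⟩ := hsub _ (hFA i m hmA)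
        constructor <;> linarith [h5.1, h5.2]
      · have h1 : |x - M| ≤ α := by rw [abs_le]; constructor <;> linarith [hx.1, hx.2]
        have h4 : r i * |x - M| ≤ α := by
          have := mul_le_mul hrj1.le h1 (abs_nonneg _) zero_le_one
          linarith
        have h5 : |F i x - F i M| ≤ α := by rw [hsim i x M]; exact h4
        rw [abs_le] at h5
        obtain ⟨hc1, hc2⟩ := hsub _ (hFA i M hMA)
        constructor <;> linarith [h5.1, h5.2]
  · rw [hclos]
    intro hcon
    have hmem : m - α ∈ A := by
      rw [← hcon]
      exact mem_Icc.2 ⟨le_refl _, by linarith⟩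
    have := (hsub _ hmem).1
    linarith
end

section
/- Let F = {F_i : i ∈ ℕ} be a countable family of contractive similarities on ℝ. If there exists a unique bounded invariant set for F, then r := sup_i r_i < 1, where r_i is the similarity ratio of F_i. -/
/-!
If `sup r_i = 1`, enlarge the convex hull `[a, b]` of a bounded invariant set `E` to
`J = [a - 1, b + 1]`. Each `F_i` is monotone or antitone, moves the endpoints of `J` by at most
`r_i ≤ 1` away from `F_i a, F_i b ∈ [a, b]`, and so maps `J` onto a subinterval of length
`r_i |J|`. Such subintervals with `r_i → 1` are dense in `J`, so `J` is a second bounded invariant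
set, contradicting uniqueness.
-/

open Metric Set

theorem Continuous.image_uIcc_of_injective {α δ : Type*} [ConditionallyCompleteLinearOrder α]
    [DenselyOrdered α] [TopologicalSpace α] [OrderTopology α] [LinearOrder δ]
    [TopologicalSpace δ] [OrderClosedTopology δ] {f : α → δ} (hf_c : Continuous f)
    (hf_i : Function.Injective f) (a b : α) : f '' uIcc a b = uIcc (f a) (f b) := by
  rcases hf_c.strictMono_of_inj hf_i with hmono | hanti
  · exact hf_c.continuousOn.image_uIcc_of_monotoneOn (hmono.monotone.monotoneOn _)
  · exact hf_c.continuousOn.image_uIcc_of_antitoneOn (hanti.antitone.antitoneOn _)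

section Similarity

variable {f : ℝ → ℝ} {r : ℝ}

theorem image_uIcc_of_abs_sub_eq_mul (hr : 0 < r) (hf : ∀ x y, |f x - f y| = r * |x - y|)
    (a b : ℝ) : f '' uIcc a b = uIcc (f a) (f b) := by
  have hf_c : Continuous f :=
    (LipschitzWith.of_dist_le_mul (K := ⟨r, hr.le⟩) fun x y => (hf x y).le).continuous
  have hf_i : Function.Injective f := fun x y hxy => by
    have := hf x y
    rw [hxy, sub_self, abs_zero, eq_comm, mul_eq_zero, abs_eq_zero, sub_eq_zero] at this
    exact this.resolve_left hr.ne'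
  exact hf_c.image_uIcc_of_injective hf_i a b

theorem mapsTo_Icc_sub_add_of_abs_sub_eq_mul (hr₀ : 0 < r) (hr₁ : r ≤ 1)
    (hf : ∀ x y, |f x - f y| = r * |x - y|) {a b t : ℝ} (ha : f a ∈ Icc a b)
    (hb : f b ∈ Icc a b) (ht : 0 ≤ t) : MapsTo f (Icc (a - t) (b + t)) (Icc (a - t) (b + t)) := by
  have hab : a - t ≤ b + t := by linarith [ha.1, ha.2]
  have hrt : r * t ≤ t := mul_le_of_le_one_left ht hr₁
  have hfa : f (a - t) ∈ Icc (a - t) (b + t) := by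
    have h := hf (a - t) a
    rw [sub_sub_cancel_left, abs_neg, abs_of_nonneg ht] at h
    obtain ⟨h₁, h₂⟩ := abs_le.mp h.le
    exact ⟨by linarith [ha.1], by linarith [ha.2]⟩
  have hfb : f (b + t) ∈ Icc (a - t) (b + t) := by
    have h := hf (b + t) b
    rw [add_sub_cancel_left, abs_of_nonneg ht] at h
    obtain ⟨h₁, h₂⟩ := abs_le.mp h.le
    exact ⟨by linarith [hb.1], by linarith [hb.2]⟩
  rw [mapsTo_iff_image_subset]
  calc f '' Icc (a - t) (b + t) = uIcc (f (a - t)) (f (b + t)) := by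
        rw [← image_uIcc_of_abs_sub_eq_mul hr₀ hf, uIcc_of_le hab]
    _ ⊆ Icc (a - t) (b + t) := uIcc_subset_Icc hfa hfb

end Similarity

theorem exists_mem_uIcc_dist_le {c d u v x : ℝ} (hu : u ∈ Icc c d) (hv : v ∈ Icc c d)
    (hx : x ∈ Icc c d) : ∃ y ∈ uIcc u v, dist x y ≤ (d - c) - |u - v| := by
  wlog huv : u ≤ v generalizing u v
  · simpa only [uIcc_comm, abs_sub_comm] using this hv hu (le_of_not_ge huv)
  refine ⟨max u (min x v), ?_, ?_⟩
  · rw [uIcc_of_le huv]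
    exact ⟨le_max_left _ _, max_le huv (min_le_right _ _)⟩
  · rw [Real.dist_eq, abs_of_nonpos (sub_nonpos.mpr huv), abs_le]
    obtain ⟨hu₁, hu₂⟩ := hu
    obtain ⟨hv₁, hv₂⟩ := hv
    obtain ⟨hx₁, hx₂⟩ := hx
    constructor <;> cases max_cases u (min x v) <;> cases min_cases x v <;> linarith

theorem IsInvariantSet.image_subset {X : Type*} [TopologicalSpace X] {F : ℕ → X → X} {E : Set X}
    (hE : IsInvariantSet F E) (i : ℕ) : F i '' E ⊆ E :=
  (subset_iUnion (fun j => F j '' E) i).trans (subset_closure.trans hE.2.ge)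

theorem IsInvariantSet.isClosed_s10 {X : Type*} [TopologicalSpace X] {F : ℕ → X → X} {E : Set X}
    (hE : IsInvariantSet F E) : IsClosed E :=
  hE.2 ▸ isClosed_closure

theorem isInvariantSet_Icc_of_one_le_iSup {F : ℕ → ℝ → ℝ} {r : ℕ → ℝ} (hr : ∀ i, 0 < r i)
    (hsim : ∀ i, ∀ x y : ℝ, |F i x - F i y| = r i * |x - y|) (hsup : 1 ≤ ⨆ i, r i) {c d : ℝ}
    (hcd : c ≤ d) (hmaps : ∀ i, MapsTo (F i) (Icc c d) (Icc c d)) :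
    IsInvariantSet F (Icc c d) := by
  refine ⟨nonempty_Icc.mpr hcd, Subset.antisymm (fun x hx => ?_)
    (closure_minimal (iUnion_subset fun i => (hmaps i).image_subset) isClosed_Icc)⟩
  rw [Metric.mem_closure_iff]
  intro ε hε
  have hlen : 0 < d - c + 1 := by linarith
  -- `F i '' [c, d]` misses a part of `[c, d]` of length `(1 - r i) (d - c)`
  obtain ⟨i, hi⟩ : ∃ i, 1 - ε / (d - c + 1) < r i :=
    exists_lt_of_lt_ciSup (hsup.trans_lt' (sub_lt_self 1 (div_pos hε hlen)))
  obtain ⟨y, hy, hxy⟩ := exists_mem_uIcc_dist_le (hmaps i ⟨le_rfl, hcd⟩) (hmaps i ⟨hcd, le_rfl⟩) hx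
  rw [← image_uIcc_of_abs_sub_eq_mul (hr i) (hsim i), uIcc_of_le hcd] at hy
  refine ⟨y, mem_iUnion.mpr ⟨i, hy⟩, hxy.trans_lt ?_⟩
  calc d - c - |F i c - F i d| = (1 - r i) * (d - c) := by
        rw [hsim i, abs_sub_comm, abs_of_nonneg (sub_nonneg.mpr hcd)]; ring
    _ ≤ ε / (d - c + 1) * (d - c) := by gcongr; linarith
    _ < ε := by rw [div_mul_eq_mul_div, div_lt_iff₀ hlen]; linarith

theorem unique_bounded_invariant_implies_sup_lt_one
    (F : ℕ → ℝ → ℝ) (r : ℕ → ℝ) (hr : ∀ i, 0 < r i ∧ r i < 1)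
    (hsim : ∀ i, ∀ x y : ℝ, |F i x - F i y| = r i * |x - y|)
    (huniq : ∃! E : Set ℝ, Bornology.IsBounded E ∧ IsInvariantSet F E) :
    (⨆ i, r i) < 1 := by
  by_contra! h_one_le
  obtain ⟨E, ⟨hEb, hE⟩, hEuniq⟩ := huniq
  have hEIcc := subset_Icc_csInf_csSup hEb.bddBelow hEb.bddAbove
  have hinf_mem := hE.isClosed_s10.csInf_mem hE.1 hEb.bddBelow
  have hsup_mem := hE.isClosed_s10.csSup_mem hE.1 hEb.bddAbove
  have hab : sInf E - 1 ≤ sSup E + 1 := by linarith [(hEIcc hinf_mem).2]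
  have hmaps i := mapsTo_Icc_sub_add_of_abs_sub_eq_mul (hr i).1 (hr i).2.le (hsim i)
    (hEIcc (hE.image_subset i (mem_image_of_mem _ hinf_mem)))
    (hEIcc (hE.image_subset i (mem_image_of_mem _ hsup_mem))) zero_le_one
  have hJ := isInvariantSet_Icc_of_one_le_iSup (fun i => (hr i).1) hsim h_one_le hab hmaps
  have hJE := hEuniq _ ⟨isBounded_Icc _ _, hJ⟩
  have hmem : sSup E + 1 ∈ E := hJE.subset (right_mem_Icc.mpr hab)
  linarith [le_csSup hEb.bddAbove hmem]
end

section
/- Let (X,d) be a complete metric space, F = {F_i : i ∈ ℕ} a countable family of contraction maps, and ρ = (ρ_i) a probability sequence (0 < ρ_i < 1, Σρ_i = 1). If μ is an invariant measure for (F, ρ), i.e. μ = Σ_i ρ_i (F_i)_♯μ, then the support of μ is an invariant set for F: supp μ = cl(⋃_i F_i(supp μ)). -/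
open Metric Set MeasureTheory
open scoped NNReal ENNReal

/-- The support of a measure on a metric space: points all of whose balls have
positive measure. -/
def msupp {X : Type*} [MetricSpace X] [MeasurableSpace X] (μ : Measure X) : Set X :=
  {x : X | ∀ ε : ℝ, 0 < ε → 0 < μ (Metric.ball x ε)}

/-!
Continuity of the maps and positivity of the weights give `F i (supp μ) ⊆ supp μ`; conversely,
once `supp μ` is conull, invariance makes the closed set `closure (⋃ i, F i (supp μ))` conull, so
it contains `supp μ`. Conullity of the support is the real issue, as `X` need not be separable.
The closure `C` of the orbit of a point under the semigroup generated by the `F i` is closed,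
separable and mapped into itself, so `d = infDist · C` satisfies `d ∘ F i ≤ d` and `d ∘ F j ≤ c d`
with `c < 1`. Invariance then forces `μ {t < d} ≤ μ {t / c < d}`, and iterating gives
`μ {t < d} = 0` for `t > 0`: `μ` lives on `C`, where the null open sets around points outside the
support have a countable subcover.
-/

theorem msupp_eq_support {X : Type*} [MetricSpace X] [MeasurableSpace X] (μ : Measure X) :
    msupp μ = μ.support := by
  ext x
  exact nhds_basis_ball.mem_measureSupport.symm

theorem Metric.infDist_le_mul_of_mapsTo {X : Type*} [PseudoMetricSpace X] {f : X → X}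
    {K : ℝ≥0} (hf : LipschitzWith K f) {s : Set X} (hs : MapsTo f s s) (x : X) :
    infDist (f x) s ≤ K * infDist x s := by
  rcases s.eq_empty_or_nonempty with rfl | hne
  · simp
  have := hne.to_subtype
  calc infDist (f x) s ≤ ⨅ y : s, K * dist x y :=
        le_ciInf fun y => (infDist_le_dist_of_mem (hs y.2)).trans (hf.dist_le_mul x y)
    _ = K * infDist x s := by rw [infDist_eq_iInf, Real.mul_iInf_of_nonneg K.coe_nonneg]

theorem exists_isClosed_isSeparable_mapsTo {ι X : Type*} [Countable ι] [TopologicalSpace X]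
    {F : ι → X → X} (hF : ∀ i, Continuous (F i)) (x : X) :
    ∃ C : Set X, IsClosed C ∧ TopologicalSpace.IsSeparable C ∧ x ∈ C ∧
      ∀ i, MapsTo (F i) C C := by
  refine ⟨closure (range fun l : List ι => l.foldr F x), isClosed_closure,
    (countable_range _).isSeparable.closure, subset_closure ⟨[], rfl⟩, fun i => ?_⟩
  refine MapsTo.closure ?_ (hF i)
  rintro _ ⟨l, rfl⟩
  exact ⟨i :: l, rfl⟩

theorem MeasureTheory.Measure.measure_compl_support_of_isSeparable {X : Type*}
    [PseudoMetricSpace X] [MeasurableSpace X] {μ : Measure X} {C : Set X}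
    (hC : TopologicalSpace.IsSeparable C) (hμC : μ Cᶜ = 0) : μ μ.supportᶜ = 0 := by
  have hLindelof : IsLindelof (μ.supportᶜ ∩ C) := by
    have := hC.separableSpace
    simpa only [Subtype.image_preimage_coe, inter_comm] using
      (HereditarilyLindelofSpace.isLindelof (Subtype.val ⁻¹' μ.supportᶜ : Set C)).image
        continuous_subtype_val
  have hnull : μ (μ.supportᶜ ∩ C) = 0 := by
    refine compl_mem_ae_iff.mp (hLindelof.compl_mem_sets_of_nhdsWithin fun x hx => ?_)
    obtain ⟨U, hU, hμU⟩ := Measure.notMem_support_iff_exists.mp hx.1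
    exact ⟨U, mem_nhdsWithin_of_mem_nhds hU, compl_mem_ae_iff.mpr hμU⟩
  refine measure_mono_null (fun x hx => ?_) (measure_union_null hnull hμC)
  by_cases hxC : x ∈ C
  exacts [Or.inl ⟨hx, hxC⟩, Or.inr hxC]

theorem MeasureTheory.measure_setOf_lt_eq_zero_of_le_div {X : Type*} [MeasurableSpace X]
    {μ : Measure X} [IsFiniteMeasure μ] {f : X → ℝ} (hf : Measurable f) {c : ℝ} (hc0 : 0 < c)
    (hc1 : c < 1) (h : ∀ t, μ {x | t < f x} ≤ μ {x | t / c < f x}) {t : ℝ} (ht : 0 < t) :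
    μ {x | t < f x} = 0 := by
  set E : ℕ → Set X := fun n => {x | t / c ^ n < f x}
  have hle : ∀ n, μ {x | t < f x} ≤ μ (E n) := by
    intro n
    induction n with
    | zero => simp [E]
    | succ n ih => simpa only [E, pow_succ, div_div] using ih.trans (h (t / c ^ n))
  have hanti : Antitone E := fun m n hmn x hx =>
    (div_le_div_of_nonneg_left ht.le (pow_pos hc0 n)
      (pow_le_pow_of_le_one hc0.le hc1.le hmn)).trans_lt hx
  have hempty : ⋂ n, E n = ∅ := by
    refine eq_empty_of_forall_notMem fun x hx => ?_
    have hfx : 0 < f x := ht.trans (by simpa [E] using mem_iInter.mp hx 0)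
    obtain ⟨n, hn⟩ := exists_pow_lt_of_lt_one (div_pos ht hfx) hc1
    have hxn : t / c ^ n < f x := mem_iInter.mp hx n
    rw [div_lt_iff₀ (pow_pos hc0 n)] at hxn
    rw [lt_div_iff₀ hfx] at hn
    linarith
  have hlim := tendsto_measure_iInter_atTop
    (fun n => (measurableSet_lt measurable_const hf).nullMeasurableSet) hanti
    ⟨0, measure_ne_top μ _⟩
  rw [hempty, measure_empty] at hlim
  exact nonpos_iff_eq_zero.mp (ge_of_tendsto' hlim hle)

section Invariant

variable {ι X : Type*} [MeasurableSpace X] {F : ι → X → X} {ρ : ι → ℝ≥0∞} {μ : Measure X}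

theorem MeasureTheory.measure_eq_tsum_preimage_of_eq_sum_map
    (hinv : μ = Measure.sum fun i => ρ i • μ.map (F i)) (hF : ∀ i, Measurable (F i))
    {E : Set X} (hE : MeasurableSet E) : μ E = ∑' i, ρ i * μ (F i ⁻¹' E) := by
  conv_lhs => rw [hinv]
  simp only [Measure.sum_apply _ hE, Measure.smul_apply, Measure.map_apply (hF _) hE,
    smul_eq_mul]

/-- Each `μ (F i ⁻¹' E) ≤ μ E`, and `μ E` is their `ρ`-average, so no term with positive weight
can be strictly smaller. -/
theorem MeasureTheory.measure_preimage_eq_of_eq_sum_map [IsFiniteMeasure μ]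
    (hinv : μ = Measure.sum fun i => ρ i • μ.map (F i)) (hF : ∀ i, Measurable (F i))
    (hρ : ∑' i, ρ i = 1) {E : Set X} (hE : MeasurableSet E) (hsub : ∀ i, F i ⁻¹' E ⊆ E)
    {j : ι} (hj : ρ j ≠ 0) : μ (F j ⁻¹' E) = μ E := by
  refine le_antisymm (measure_mono (hsub j)) (not_lt.mp fun hlt => lt_irrefl (μ E) ?_)
  have hjtop : ρ j ≠ ∞ := ne_top_of_le_ne_top (by simp [hρ]) (ENNReal.le_tsum j)
  have hsum := measure_eq_tsum_preimage_of_eq_sum_map hinv hF hE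
  calc μ E = ∑' i, ρ i * μ (F i ⁻¹' E) := hsum
    _ < ∑' i, ρ i * μ E :=
      ENNReal.tsum_lt_tsum (hsum ▸ measure_ne_top μ E)
        (fun i => mul_le_mul_right (measure_mono (hsub i)) _)
        (ENNReal.mul_lt_mul_right hj hjtop hlt)
    _ = μ E := by rw [ENNReal.tsum_mul_right, hρ, one_mul]

theorem MeasureTheory.measure_compl_eq_zero_of_eq_sum_map [PseudoMetricSpace X]
    [BorelSpace X] [IsFiniteMeasure μ]
    (hinv : μ = Measure.sum fun i => ρ i • μ.map (F i)) (hρ : ∑' i, ρ i = 1) {C : Set X}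
    (hC : IsClosed C) (hCne : C.Nonempty) (hmaps : ∀ i, MapsTo (F i) C C)
    (hlip : ∀ i, LipschitzWith 1 (F i)) {j : ι} (hj : ρ j ≠ 0) {K : ℝ≥0} (hK : K < 1)
    (hFj : LipschitzWith K (F j)) : μ Cᶜ = 0 := by
  set d : X → ℝ := fun x => infDist x C
  have hd : Measurable d := (continuous_infDist_pt C).measurable
  have hF : ∀ i, Measurable (F i) := fun i => (hlip i).continuous.measurable
  obtain ⟨c, hKc, hc1⟩ := exists_between hK
  have hc0 : (0 : ℝ) < c := K.coe_nonneg.trans_lt hKc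
  have hscale : ∀ t, μ {x | t < d x} ≤ μ {x | t / c < d x} := by
    intro t
    have hsub : ∀ i, F i ⁻¹' {x | t < d x} ⊆ {x | t < d x} := fun i x hx =>
      hx.trans_le (by simpa using infDist_le_mul_of_mapsTo (hlip i) (hmaps i) x)
    rw [← measure_preimage_eq_of_eq_sum_map hinv hF hρ (measurableSet_lt measurable_const hd)
      hsub hj]
    refine measure_mono fun x (hx : t < d (F j x)) => ?_
    change t / c < d x
    rw [div_lt_iff₀ hc0]
    calc t < d (F j x) := hx
      _ ≤ K * d x := infDist_le_mul_of_mapsTo hFj (hmaps j) x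
      _ ≤ d x * c := by rw [mul_comm]; gcongr; exact infDist_nonneg
  have hcover : Cᶜ ⊆ ⋃ n : ℕ, {x | 1 / ((n : ℝ) + 1) < d x} := fun x hx =>
    mem_iUnion.mpr (exists_nat_one_div_lt ((hC.notMem_iff_infDist_pos hCne).mp hx))
  exact measure_mono_null hcover <| measure_iUnion_null fun n =>
    measure_setOf_lt_eq_zero_of_le_div hd hc0 (by exact_mod_cast hc1) hscale (by positivity)

variable [TopologicalSpace X] [BorelSpace X]

theorem MeasureTheory.image_support_subset_support_of_eq_sum_map
    (hinv : μ = Measure.sum fun i => ρ i • μ.map (F i)) {i : ι} (hF : Continuous (F i))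
    (hρ : ρ i ≠ 0) : F i '' μ.support ⊆ μ.support := by
  rintro _ ⟨x, hx, rfl⟩
  rw [Measure.mem_support_iff_forall] at hx ⊢
  intro U hU
  calc 0 < ρ i * μ (F i ⁻¹' U) := ENNReal.mul_pos hρ (hx _ (hF.continuousAt hU)).ne'
    _ ≤ (ρ i • μ.map (F i)) U := by
      rw [Measure.smul_apply, smul_eq_mul]
      exact mul_le_mul_right (Measure.le_map_apply hF.measurable.aemeasurable U) _
    _ ≤ Measure.sum (fun i => ρ i • μ.map (F i)) U := Measure.le_sum _ i U
    _ = μ U := by rw [← hinv]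

theorem MeasureTheory.support_subset_closure_iUnion_image_of_eq_sum_map
    (hinv : μ = Measure.sum fun i => ρ i • μ.map (F i)) (hF : ∀ i, Measurable (F i))
    (hsupp : μ μ.supportᶜ = 0) : μ.support ⊆ closure (⋃ i, F i '' μ.support) := by
  refine Measure.support_subset_of_isClosed isClosed_closure ?_
  rw [mem_ae_iff,
    measure_eq_tsum_preimage_of_eq_sum_map hinv hF isClosed_closure.measurableSet.compl]
  refine ENNReal.tsum_eq_zero.mpr fun i => ?_
  have hpre : F i ⁻¹' (closure (⋃ i, F i '' μ.support))ᶜ ⊆ μ.supportᶜ :=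
    fun x hx hxs => hx (subset_closure (mem_iUnion_of_mem i ⟨x, hxs, rfl⟩))
  rw [measure_mono_null hpre hsupp, mul_zero]

end Invariant

theorem support_invariant_measure_is_invariant_set_general
    {X : Type*} [MetricSpace X] [MeasurableSpace X] [BorelSpace X]
    (F : ℕ → X → X) (hF : ∀ i, ∃ r : ℝ≥0, ContractingWith r (F i))
    (ρ : ℕ → ℝ≥0) (hρ : ∀ i, 0 < ρ i ∧ ρ i < 1) (hρs : ∑' i, ρ i = 1)
    (μ : Measure X) [IsProbabilityMeasure μ]
    (hinv : μ = Measure.sum (fun i => (ρ i : ℝ≥0∞) • μ.map (F i))) :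
    msupp μ = closure (⋃ i : ℕ, F i '' msupp μ) := by
  choose r hr using hF
  have hlip : ∀ i, LipschitzWith 1 (F i) := fun i => (hr i).2.weaken (hr i).1.le
  have hcont : ∀ i, Continuous (F i) := fun i => (hlip i).continuous
  have hρ0 : ∀ i, (ρ i : ℝ≥0∞) ≠ 0 := fun i => by simpa using (hρ i).1.ne'
  have hρ1 : ∑' i, (ρ i : ℝ≥0∞) = 1 := by
    have hsummable : Summable ρ := by
      by_contra h
      simp [tsum_eq_zero_of_not_summable h] at hρs
    rw [← ENNReal.coe_tsum hsummable, hρs, ENNReal.coe_one]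
  obtain ⟨x₀⟩ := nonempty_of_isProbabilityMeasure μ
  obtain ⟨C, hC, hCsep, hx₀C, hmaps⟩ := exists_isClosed_isSeparable_mapsTo hcont x₀
  have hμC : μ Cᶜ = 0 :=
    measure_compl_eq_zero_of_eq_sum_map hinv hρ1 hC ⟨x₀, hx₀C⟩ hmaps hlip (hρ0 0) (hr 0).1
      (hr 0).2
  have hsupp : μ μ.supportᶜ = 0 := Measure.measure_compl_support_of_isSeparable hCsep hμC
  rw [msupp_eq_support]
  exact (support_subset_closure_iUnion_image_of_eq_sum_map hinv
    (fun i => (hcont i).measurable) hsupp).antisymm <| closure_minimal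
      (iUnion_subset fun i => image_support_subset_support_of_eq_sum_map hinv (hcont i) (hρ0 i))
      Measure.isClosed_support

theorem support_invariant_measure_is_invariant_set
    {X : Type*} [MetricSpace X] [CompleteSpace X] [MeasurableSpace X] [BorelSpace X]
    (F : ℕ → X → X) (hF : ∀ i, ∃ r : ℝ≥0, ContractingWith r (F i))
    (ρ : ℕ → ℝ≥0) (hρ : ∀ i, 0 < ρ i ∧ ρ i < 1) (hρs : ∑' i, ρ i = 1)
    (μ : Measure X) [IsProbabilityMeasure μ]
    (hinv : μ = Measure.sum (fun i => (ρ i : ℝ≥0∞) • μ.map (F i))) :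
    msupp μ = closure (⋃ i : ℕ, F i '' msupp μ) :=
  support_invariant_measure_is_invariant_set_general F hF ρ hρ hρs μ hinv
end

section
/- Let (X,d) be a complete metric space, F = {F_i : i ∈ ℕ} a countable family of contraction maps, ρ a probability sequence, and μ an invariant measure for (F, ρ) (μ = Σ_i ρ_i (F_i)_♯μ). Then supp μ = cl(P), where P is the set of fixed points of finite compositions of members of F. -/
open Metric Set MeasureTheory
open scoped NNReal ENNReal

/-!
Every fixed point `p` of a composition `G` of the maps lies in the support: invariance gives
`c • G₊μ ≤ μ` for some `c > 0`, hence `cⁿ • (Gⁿ)₊μ ≤ μ`, and `Gⁿ` squeezes a ball around `p` of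
positive measure into an arbitrarily small ball around `p`.

Conversely, the closure `A` of these fixed points is invariant under every `F i`, since `F i p` is
the limit of the fixed points of `F i ∘ Gⁿ`. So `d = infDist · A` satisfies `d ∘ F i ≤ d` for all
`i` and `d ∘ F j ≤ K d` for a contraction factor `K < 1`. Applying invariance of `μ` to the sets
`{t < d}` shows that every annulus `{t < d ≤ t / K}` is null, and these annuli cover `Aᶜ`.
-/

open Filter Function Topology

lemma ContractingWith.lipschitzWith_one {X : Type*} [EMetricSpace X] {K : ℝ≥0} {f : X → X}
    (hf : ContractingWith K f) : LipschitzWith 1 f :=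
  hf.2.weaken hf.1.le

section Compositions

variable {ι X : Type*}

def listComp (F : ι → X → X) (l : List ι) : X → X := fun x => l.foldr (fun i y => F i y) x

lemma listComp_cons (F : ι → X → X) (i : ι) (l : List ι) :
    listComp F (i :: l) = F i ∘ listComp F l := rfl

lemma listComp_append (F : ι → X → X) (l₁ l₂ : List ι) :
    listComp F (l₁ ++ l₂) = listComp F l₁ ∘ listComp F l₂ :=
  funext fun _ => List.foldr_append ..

lemma listComp_flatten_replicate (F : ι → X → X) (l : List ι) (n : ℕ) :
    listComp F (List.replicate n l).flatten = (listComp F l)^[n] := by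
  induction n with
  | zero => rfl
  | succ n ih =>
    rw [List.replicate_succ, List.flatten_cons, listComp_append, ih, iterate_succ']

lemma measurable_listComp [MeasurableSpace X] {F : ι → X → X} (hF : ∀ i, Measurable (F i)) :
    ∀ l, Measurable (listComp F l)
  | [] => measurable_id
  | i :: l => (hF i).comp (measurable_listComp hF l)

lemma lipschitzWith_one_listComp [PseudoEMetricSpace X] {F : ι → X → X}
    (hF : ∀ i, LipschitzWith 1 (F i)) : ∀ l, LipschitzWith 1 (listComp F l)
  | [] => LipschitzWith.id
  | i :: l => by rw [listComp_cons]; simpa using (hF i).comp (lipschitzWith_one_listComp hF l)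

lemma exists_contractingWith_listComp [EMetricSpace X] {F : ι → X → X}
    (hF : ∀ i, ∃ r, ContractingWith r (F i)) {l : List ι} (hl : l ≠ []) :
    ∃ r, ContractingWith r (listComp F l) := by
  obtain ⟨i, l, rfl⟩ := List.exists_cons_of_ne_nil hl
  obtain ⟨r, hr⟩ := hF i
  have hF1 i : LipschitzWith 1 (F i) := (hF i).elim fun _ h => h.lipschitzWith_one
  exact ⟨r, hr.1, by rw [listComp_cons]; simpa using hr.2.comp (lipschitzWith_one_listComp hF1 l)⟩

end Compositions

section FixedPoints

variable {X : Type*} [MetricSpace X] [CompleteSpace X]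

theorem mem_closure_setOf_isFixedPt_comp_iterate {H G : X → X} {r K : ℝ≥0}
    (hH : ContractingWith r H) (hG : ContractingWith K G) {p : X} (hp : IsFixedPt G p) :
    H p ∈ closure {q | ∃ n, IsFixedPt (H ∘ G^[n]) q} := by
  have : Nonempty X := ⟨p⟩
  have hc n : ContractingWith r (H ∘ G^[n]) :=
    ⟨hH.1, (hH.2.comp (hG.2.iterate n)).weaken (mul_le_of_le_one_right' (pow_le_one' hG.1.le n))⟩
  have hdist n : dist (H p) ((hc n).fixedPoint) ≤ K ^ n * dist p (H p) / (1 - r) := by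
    refine ((hc n).dist_fixedPoint_le _).trans (div_le_div_of_nonneg_right ?_ ?_)
    calc dist (H p) (H (G^[n] (H p)))
        ≤ dist p (G^[n] (H p)) := by simpa using hH.lipschitzWith_one.dist_le_mul p _
      _ = dist (G^[n] p) (G^[n] (H p)) := by rw [hp.iterate n]
      _ ≤ K ^ n * dist p (H p) := by simpa using (hG.2.iterate n).dist_le_mul p (H p)
    · exact sub_nonneg.2 (by exact_mod_cast hH.1.le)
  have hlim : Tendsto (fun n : ℕ => (K : ℝ) ^ n * dist p (H p) / (1 - r)) atTop (𝓝 0) := by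
    simpa using ((tendsto_pow_atTop_nhds_zero_of_lt_one K.coe_nonneg hG.1).mul_const
      (dist p (H p))).div_const (1 - (r : ℝ))
  refine mem_closure_of_tendsto ((tendsto_iff_dist_tendsto_zero.2 <|
    squeeze_zero (fun _ => dist_nonneg) (fun n => ?_) hlim))
    (Eventually.of_forall fun n => ⟨n, (hc n).fixedPoint_isFixedPt⟩)
  rw [dist_comm]
  exact hdist n

theorem mapsTo_closure_fixedPtsOfComps {F : ℕ → X → X} (hF : ∀ i, ∃ r, ContractingWith r (F i))
    (i : ℕ) : MapsTo (F i) (closure (fixedPtsOfComps F)) (closure (fixedPtsOfComps F)) := by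
  obtain ⟨r, hr⟩ := hF i
  refine (MapsTo.closure ?_ hr.2.continuous).mono_right closure_closure.subset
  rintro p ⟨l, hl, hp⟩
  obtain ⟨s, hs⟩ := exists_contractingWith_listComp hF hl
  refine closure_mono ?_ (mem_closure_setOf_isFixedPt_comp_iterate hr hs hp)
  rintro q ⟨n, hq⟩
  refine ⟨i :: (List.replicate n l).flatten, List.cons_ne_nil _ _, ?_⟩
  change IsFixedPt (listComp F _) q
  rwa [listComp_cons, listComp_flatten_replicate]

end FixedPoints

section Support

variable {X : Type*} [MetricSpace X] [MeasurableSpace X]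

theorem isClosed_msupp (μ : Measure X) : IsClosed (msupp μ) := by
  refine isOpen_compl_iff.1 (isOpen_iff_forall_mem_open.2 fun x hx => ?_)
  simp only [msupp, mem_compl_iff, mem_ofPred_eq, not_forall, not_lt, nonpos_iff_eq_zero] at hx
  obtain ⟨ε, hε, hx0⟩ := hx
  refine ⟨ball x ε, fun y (hy : dist y x < ε) hys => ?_, isOpen_ball, mem_ball_self hε⟩
  exact (hys _ (sub_pos.2 hy)).ne' (measure_mono_null (ball_subset_ball' (by linarith)) hx0)

theorem msupp_subset_of_measure_compl_eq_zero {μ : Measure X} {A : Set X} (hA : IsClosed A)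
    (hμA : μ Aᶜ = 0) : msupp μ ⊆ A := by
  intro x hx
  by_contra hxA
  obtain ⟨ε, hε, hball⟩ := Metric.isOpen_iff.1 hA.isOpen_compl x hxA
  exact (hx ε hε).ne' (measure_mono_null hball hμA)

end Support

section Domination

variable {X : Type*} [MeasurableSpace X]

def DominatesPushforward (μ : Measure X) (f : X → X) : Prop :=
  ∃ c : ℝ≥0∞, c ≠ 0 ∧ c • μ.map f ≤ μ

namespace DominatesPushforward

variable {μ : Measure X} {f g : X → X}

protected lemma id : DominatesPushforward μ id := ⟨1, one_ne_zero, by simp⟩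

lemma comp (hf : DominatesPushforward μ f) (hg : DominatesPushforward μ g) (hfm : Measurable f)
    (hgm : Measurable g) : DominatesPushforward μ (f ∘ g) := by
  obtain ⟨a, ha, hfμ⟩ := hf
  obtain ⟨b, hb, hgμ⟩ := hg
  refine ⟨a * b, mul_ne_zero ha hb, ?_⟩
  calc (a * b) • μ.map (f ∘ g) = a • (b • μ.map g).map f := by
        rw [Measure.map_smul, Measure.map_map hfm hgm, smul_smul]
    _ ≤ a • μ.map f := smul_le_smul_left a (Measure.map_mono hgμ hfm)
    _ ≤ μ := hfμ

lemma iterate (hf : DominatesPushforward μ f) (hfm : Measurable f) :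
    ∀ n, DominatesPushforward μ f^[n]
  | 0 => .id
  | n + 1 => by
    rw [iterate_succ']
    exact hf.comp (hf.iterate hfm n) hfm (hfm.iterate n)

end DominatesPushforward

lemma dominatesPushforward_of_eq_sum {ι : Type*} {μ : Measure X} {F : ι → X → X}
    {ρ : ι → ℝ≥0∞} (hinv : μ = Measure.sum fun i => ρ i • μ.map (F i)) {i : ι} (hρ : ρ i ≠ 0) :
    DominatesPushforward μ (F i) :=
  ⟨ρ i, hρ, (Measure.le_sum _ i).trans_eq hinv.symm⟩

lemma dominatesPushforward_listComp {ι : Type*} {μ : Measure X} {F : ι → X → X}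
    (hμF : ∀ i, DominatesPushforward μ (F i)) (hFm : ∀ i, Measurable (F i)) :
    ∀ l, DominatesPushforward μ (listComp F l)
  | [] => .id
  | i :: l => (hμF i).comp (dominatesPushforward_listComp hμF hFm l) (hFm i)
      (measurable_listComp hFm l)

variable [MetricSpace X] [BorelSpace X] {μ : Measure X} [NeZero μ]

theorem mem_msupp_of_isFixedPt {G : X → X} {K : ℝ≥0} (hG : ContractingWith K G)
    (hμG : DominatesPushforward μ G) {p : X} (hp : IsFixedPt G p) : p ∈ msupp μ := by
  intro ε hε
  obtain ⟨R, hR⟩ : ∃ R : ℕ, μ (closedBall p R) ≠ 0 := by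
    by_contra! h
    refine NeZero.ne μ (Measure.measure_univ_eq_zero.1 ?_)
    rw [← iUnion_ball_nat p]
    exact measure_iUnion_null fun n => measure_mono_null ball_subset_closedBall (h n)
  obtain ⟨n, hn⟩ := (((tendsto_pow_atTop_nhds_zero_of_lt_one K.coe_nonneg hG.1).mul_const
    (R : ℝ)).eventually (gt_mem_nhds (by rwa [zero_mul]))).exists
  obtain ⟨c, hc, hcμ⟩ := hμG.iterate hG.2.continuous.measurable n
  have hmaps : MapsTo G^[n] (closedBall p R) (ball p ε) := fun y hy =>
    closedBall_subset_ball (by simpa using hn)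
      (hp.iterate n ▸ (hG.2.iterate n).mapsTo_closedBall p R hy)
  calc 0 < c * μ (closedBall p R) := ENNReal.mul_pos hc hR
    _ ≤ c * μ (G^[n] ⁻¹' ball p ε) := by gcongr; exact hmaps
    _ = (c • μ.map G^[n]) (ball p ε) := by
      rw [Measure.smul_apply, Measure.map_apply (hG.2.continuous.measurable.iterate n)
        measurableSet_ball, smul_eq_mul]
    _ ≤ μ (ball p ε) := hcμ _

theorem fixedPtsOfComps_subset_msupp {F : ℕ → X → X} (hF : ∀ i, ∃ r, ContractingWith r (F i))
    (hμF : ∀ i, DominatesPushforward μ (F i)) : fixedPtsOfComps F ⊆ msupp μ := by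
  rintro p ⟨l, hl, hp⟩
  obtain ⟨r, hr⟩ := exists_contractingWith_listComp hF hl
  have hFm i : Measurable (F i) := (hF i).elim fun _ h => h.2.continuous.measurable
  exact mem_msupp_of_isFixedPt hr (dominatesPushforward_listComp hμF hFm l) hp

end Domination

section Concentration

variable {X : Type*} [MeasurableSpace X]

theorem measure_preimage_eq_of_preimage_subset {ι : Type*} {F : ι → X → X} {ρ : ι → ℝ≥0∞}
    {μ : Measure X} [IsFiniteMeasure μ] (hFm : ∀ i, Measurable (F i)) (hρ : ∑' i, ρ i = 1)
    (hinv : μ = Measure.sum fun i => ρ i • μ.map (F i)) {S : Set X} (hS : MeasurableSet S)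
    (hFS : ∀ i, F i ⁻¹' S ⊆ S) {j : ι} (hj : ρ j ≠ 0) : μ (F j ⁻¹' S) = μ S := by
  have hsum : μ S = ∑' i, ρ i * μ (F i ⁻¹' S) := by
    conv_lhs => rw [hinv]
    simp [Measure.sum_apply _ hS, Measure.map_apply (hFm _) hS]
  have hρj : ρ j ≠ ∞ := ne_top_of_le_ne_top ENNReal.one_ne_top (hρ ▸ ENNReal.le_tsum j)
  refine le_antisymm (measure_mono (hFS j)) (not_lt.1 fun hlt => lt_irrefl (μ S) ?_)
  calc μ S = ∑' i, ρ i * μ (F i ⁻¹' S) := hsum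
    _ < ∑' i, ρ i * μ S := ENNReal.tsum_lt_tsum (hsum ▸ measure_ne_top μ S)
        (fun i => by gcongr; exact hFS i) (ENNReal.mul_lt_mul_right hj hρj hlt)
    _ = μ S := by rw [ENNReal.tsum_mul_right, hρ, one_mul]

theorem measure_setOf_pos_eq_zero_of_annuli {μ : Measure X} {f : X → ℝ} {K : ℝ} (hK0 : 0 < K)
    (hK1 : K < 1) (h : ∀ t > 0, μ {x | t < f x ∧ K * f x ≤ t} = 0) : μ {x | 0 < f x} = 0 := by
  refine measure_mono_null (fun x (hx : 0 < f x) => ?_)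
    (measure_iUnion_null fun n : ℤ => h (K⁻¹ ^ n) (zpow_pos (inv_pos.2 hK0) n))
  obtain ⟨n, hn1, hn2⟩ := exists_mem_Ioc_zpow hx ((one_lt_inv₀ hK0).2 hK1)
  refine mem_iUnion.2 ⟨n, hn1, ?_⟩
  calc K * f x ≤ K * K⁻¹ ^ (n + 1) := by gcongr
    _ = K⁻¹ ^ n := by rw [zpow_add_one₀ (inv_ne_zero hK0.ne')]; field_simp

end Concentration

theorem infDist_apply_le_mul_of_mapsTo {X : Type*} [PseudoMetricSpace X] {f : X → X} {K : ℝ≥0}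
    (hf : LipschitzWith K f) {A : Set X} (hA : A.Nonempty) (hfA : MapsTo f A A) (x : X) :
    infDist (f x) A ≤ K * infDist x A := by
  have := hA.to_subtype
  rw [infDist_eq_iInf (x := x), Real.mul_iInf_of_nonneg K.coe_nonneg]
  exact le_ciInf fun y => (infDist_le_dist_of_mem (hfA y.2)).trans (hf.dist_le_mul x y)

theorem measure_compl_eq_zero_of_mapsTo {X ι : Type*} [MetricSpace X] [MeasurableSpace X]
    [BorelSpace X] {F : ι → X → X} {ρ : ι → ℝ≥0∞} {μ : Measure X} [IsFiniteMeasure μ]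
    (hρ : ∑' i, ρ i = 1) (hinv : μ = Measure.sum fun i => ρ i • μ.map (F i))
    (hF : ∀ i, LipschitzWith 1 (F i)) {j : ι} {K : ℝ≥0} (hj : ContractingWith K (F j))
    (hρj : ρ j ≠ 0) {A : Set X} (hA : IsClosed A) (hAne : A.Nonempty)
    (hFA : ∀ i, MapsTo (F i) A A) : μ Aᶜ = 0 := by
  -- enlarging the constant makes it positive, so that the annuli below exhaust `Aᶜ`
  set K' : ℝ≥0 := max K 2⁻¹
  have hK'j : LipschitzWith K' (F j) := hj.2.weaken (le_max_left _ _)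
  have hAc : Aᶜ = {x | 0 < infDist x A} := by ext x; exact hA.notMem_iff_infDist_pos hAne
  rw [hAc]
  refine measure_setOf_pos_eq_zero_of_annuli (K := K') (by positivity)
    (by exact_mod_cast max_lt hj.1 (by norm_num)) fun t _ => ?_
  set S := {x | t < infDist x A}
  have hS : MeasurableSet S :=
    measurableSet_lt measurable_const (continuous_infDist_pt A).measurable
  have hFS i : F i ⁻¹' S ⊆ S := fun x hx =>
    hx.trans_le (by simpa using infDist_apply_le_mul_of_mapsTo (hF i) hAne (hFA i) x)
  have hSj := measure_preimage_eq_of_preimage_subset (fun i => (hF i).continuous.measurable)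
    hρ hinv hS hFS hρj
  have hnull : μ (S \ F j ⁻¹' S) = 0 := by
    rw [measure_sdiff (hFS j) (hS.preimage (hF j).continuous.measurable).nullMeasurableSet
      (measure_ne_top _ _), hSj, tsub_self]
  refine measure_mono_null ?_ hnull
  rintro x ⟨htx, hKx⟩
  refine ⟨htx, fun hFx => ?_⟩
  exact (hFx.trans_le (infDist_apply_le_mul_of_mapsTo hK'j hAne (hFA j) x)).not_ge hKx

theorem support_invariant_measure_eq_closure_fixedPts
    {X : Type*} [MetricSpace X] [CompleteSpace X] [MeasurableSpace X] [BorelSpace X]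
    (F : ℕ → X → X) (hF : ∀ i, ∃ r : ℝ≥0, ContractingWith r (F i))
    (ρ : ℕ → ℝ≥0) (hρ : ∀ i, 0 < ρ i ∧ ρ i < 1) (hρs : ∑' i, ρ i = 1)
    (μ : Measure X) [IsProbabilityMeasure μ]
    (hinv : μ = Measure.sum (fun i => (ρ i : ℝ≥0∞) • μ.map (F i))) :
    msupp μ = closure (fixedPtsOfComps F) := by
  have hρ0 i : (ρ i : ℝ≥0∞) ≠ 0 := by exact_mod_cast (hρ i).1.ne'
  have hρs' : ∑' i, (ρ i : ℝ≥0∞) = 1 := by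
    refine ENNReal.tsum_coe_eq ((Summable.hasSum_iff ?_).2 hρs)
    by_contra hns
    simp [tsum_eq_zero_of_not_summable hns] at hρs
  have hμF i : DominatesPushforward μ (F i) := dominatesPushforward_of_eq_sum hinv (hρ0 i)
  have := nonempty_of_isProbabilityMeasure μ
  obtain ⟨r, hr⟩ := hF 0
  have hPne : (fixedPtsOfComps F).Nonempty :=
    ⟨hr.fixedPoint, [0], List.cons_ne_nil _ _, hr.fixedPoint_isFixedPt⟩
  have hμA : μ (closure (fixedPtsOfComps F))ᶜ = 0 :=
    measure_compl_eq_zero_of_mapsTo hρs' hinv (fun i => (hF i).elim fun _ h => h.lipschitzWith_one)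
      hr (hρ0 0) isClosed_closure hPne.closure (mapsTo_closure_fixedPtsOfComps hF)
  exact subset_antisymm (msupp_subset_of_measure_compl_eq_zero isClosed_closure hμA)
    (closure_minimal (fixedPtsOfComps_subset_msupp hF hμF) (isClosed_msupp μ))
end

section
/- Let F = {F_i : i ∈ ℕ} be a countable family of contractions on a complete metric space with fixed points x_i, and ρ a probability sequence. If μ is an invariant measure for (F,ρ), cl(P) is the smallest invariant set (P the fixed points of finite compositions), and for any ε > 0, any indices i_1,…,i_k, the ε-enlargement P_ε := {y : dist(y, cl(P)) < ε} satisfies μ(P_ε) = μ((F_{i_1} ∘ ⋯ ∘ F_{i_k})⁻¹(P_ε)). -/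
open Metric Set MeasureTheory
open scoped NNReal ENNReal

/-!
Since each `F i` maps `cl(P)` into itself and is `1`-Lipschitz, it maps the enlargement `P_ε`
into itself, so `μ (P_ε) ≤ μ ((F i)⁻¹ P_ε)` for every `i`. Averaging these inequalities with the
weights `ρ i` gives back `μ (P_ε)` by invariance of `μ`, so all of them are equalities and
`(F i)⁻¹ P_ε` differs from `P_ε` by a null set. Invariance also makes every `F i` quasi measure
preserving, so null sets pull back to null sets along finite compositions, and the preimage of
`P_ε` under any composition is almost everywhere equal to `P_ε`.
-/

open Measure

theorem ENNReal.eq_of_le_of_tsum_mul_eq {ι : Type*} {a : ℝ≥0∞} (ha : a ≠ ∞) {b ρ : ι → ℝ≥0∞}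
    (hab : ∀ j, a ≤ b j) (hρ : ∑' j, ρ j = 1) (hsum : ∑' j, ρ j * b j = a)
    {i : ι} (hρi : ρ i ≠ 0) : b i = a := by
  by_contra hne
  have hρi_top : ρ i ≠ ∞ := ne_top_of_le_ne_top one_ne_top (hρ ▸ ENNReal.le_tsum i)
  have hmean : ∑' j, ρ j * a = a := by rw [ENNReal.tsum_mul_right, hρ, one_mul]
  have hlt : ∑' j, ρ j * a < ∑' j, ρ j * b j :=
    ENNReal.tsum_lt_tsum (by rwa [hmean]) (fun j => by gcongr; exact hab j)
      (ENNReal.mul_lt_mul_right hρi hρi_top ((hab i).lt_of_ne' hne))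
  rw [hmean, hsum] at hlt
  exact lt_irrefl a hlt

theorem Metric.mapsTo_thickening_of_lipschitzWith_one {X Y : Type*} [PseudoEMetricSpace X]
    [PseudoEMetricSpace Y] {f : X → Y} (hf : LipschitzWith 1 f) {C : Set X} {D : Set Y}
    (hC : MapsTo f C D) (ε : ℝ) : MapsTo f (thickening ε C) (thickening ε D) := by
  intro y hy
  obtain ⟨c, hc, hyc⟩ := (mem_thickening_iff_exists_edist_lt C y).1 hy
  refine (mem_thickening_iff_exists_edist_lt D (f y)).2 ⟨f c, hC hc, ?_⟩
  calc edist (f y) (f c) ≤ edist y c := by simpa using hf y c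
    _ < ENNReal.ofReal ε := hyc

theorem IsInvariantSet.mapsTo_s16 {X : Type*} [TopologicalSpace X] {F : ℕ → X → X} {E : Set X}
    (hE : IsInvariantSet F E) (i : ℕ) : MapsTo (F i) E E := fun _ hy => by
  rw [hE.2]
  exact subset_closure (mem_iUnion.2 ⟨i, mem_image_of_mem _ hy⟩)

section StationaryMeasure

variable {X ι : Type*} [MeasurableSpace X] {μ : Measure X} {F : ι → X → X} {ρ : ι → ℝ≥0∞}

theorem measure_eq_tsum_mul_measure_preimage (hF : ∀ i, Measurable (F i))
    (hinv : μ = Measure.sum fun i => ρ i • μ.map (F i)) {S : Set X} (hS : MeasurableSet S) :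
    μ S = ∑' i, ρ i * μ (F i ⁻¹' S) := by
  conv_lhs => rw [hinv]
  simp only [Measure.sum_apply _ hS, Measure.smul_apply, Measure.map_apply (hF _) hS, smul_eq_mul]

theorem quasiMeasurePreserving_of_eq_sum_smul_map (hF : ∀ i, Measurable (F i))
    (hinv : μ = Measure.sum fun i => ρ i • μ.map (F i)) {i : ι} (hρi : ρ i ≠ 0) :
    QuasiMeasurePreserving (F i) μ μ := by
  refine ⟨hF i, (absolutelyContinuous_smul hρi).trans (absolutelyContinuous_of_le ?_)⟩
  conv_rhs => rw [hinv]
  exact Measure.le_sum (fun j => ρ j • μ.map (F j)) i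

theorem preimage_ae_eq_of_subset_preimage [IsFiniteMeasure μ] (hF : ∀ i, Measurable (F i))
    (hinv : μ = Measure.sum fun i => ρ i • μ.map (F i)) (hρ : ∑' i, ρ i = 1)
    {S : Set X} (hS : MeasurableSet S) (hSF : ∀ i, S ⊆ F i ⁻¹' S) {i : ι} (hρi : ρ i ≠ 0) :
    F i ⁻¹' S =ᵐ[μ] S := by
  have hpre : μ (F i ⁻¹' S) = μ S :=
    ENNReal.eq_of_le_of_tsum_mul_eq (measure_ne_top μ S) (fun j => measure_mono (hSF j)) hρ
      (measure_eq_tsum_mul_measure_preimage hF hinv hS).symm hρi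
  exact (ae_eq_of_subset_of_measure_ge (hSF i) hpre.le hS.nullMeasurableSet
    (measure_ne_top μ _)).symm

end StationaryMeasure

section Compositions

variable {X ι : Type*} [MeasurableSpace X] {μ : Measure X} {F : ι → X → X}

theorem quasiMeasurePreserving_foldr (hF : ∀ i, QuasiMeasurePreserving (F i) μ μ) :
    ∀ l : List ι, QuasiMeasurePreserving (fun z => l.foldr (fun i y => F i y) z) μ μ
  | [] => QuasiMeasurePreserving.id μ
  | i :: l => (hF i).comp (quasiMeasurePreserving_foldr hF l)

theorem preimage_foldr_ae_eq (hF : ∀ i, QuasiMeasurePreserving (F i) μ μ) {S : Set X}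
    (hS : ∀ i, F i ⁻¹' S =ᵐ[μ] S) :
    ∀ l : List ι, (fun z => l.foldr (fun i y => F i y) z) ⁻¹' S =ᵐ[μ] S
  | [] => ae_eq_refl S
  | i :: l =>
    ((quasiMeasurePreserving_foldr hF l).preimage_ae_eq (hS i)).trans
      (preimage_foldr_ae_eq hF hS l)

end Compositions

theorem measure_enlargement_eq_measure_preimage_general
    {X : Type*} [MetricSpace X] [MeasurableSpace X] [BorelSpace X]
    (F : ℕ → X → X) (hF : ∀ i, ∃ r : ℝ≥0, ContractingWith r (F i))
    (ρ : ℕ → ℝ≥0) (hρ : ∀ i, 0 < ρ i ∧ ρ i < 1) (hρs : ∑' i, ρ i = 1)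
    (μ : Measure X) [IsProbabilityMeasure μ]
    (hinv : μ = Measure.sum (fun i => (ρ i : ℝ≥0∞) • μ.map (F i)))
    (hsmall : IsInvariantSet F (closure (fixedPtsOfComps F)) ∧
      ∀ A : Set X, IsInvariantSet F A → closure (fixedPtsOfComps F) ⊆ A) :
    ∀ ε > (0 : ℝ), ∀ l : List ℕ, l ≠ [] →
      μ (Metric.thickening ε (closure (fixedPtsOfComps F))) =
        μ ((fun z => l.foldr (fun i y => F i y) z) ⁻¹'
            Metric.thickening ε (closure (fixedPtsOfComps F))) := by
  intro ε _ l _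
  set P := thickening ε (closure (fixedPtsOfComps F))
  have hLip : ∀ i, LipschitzWith 1 (F i) := fun i =>
    let ⟨_, hr⟩ := hF i
    hr.toLipschitzWith.weaken hr.1.le
  have hmeas : ∀ i, Measurable (F i) := fun i => (hLip i).continuous.measurable
  have hρi : ∀ i, (ρ i : ℝ≥0∞) ≠ 0 := fun i => ENNReal.coe_ne_zero.2 (hρ i).1.ne'
  have hρsum : Summable ρ := by
    by_contra h
    exact zero_ne_one ((tsum_eq_zero_of_not_summable h).symm.trans hρs)
  have hρs' : ∑' i, (ρ i : ℝ≥0∞) = 1 := by rw [← ENNReal.coe_tsum hρsum, hρs, ENNReal.coe_one]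
  have hPF : ∀ i, P ⊆ F i ⁻¹' P := fun i =>
    mapsTo_thickening_of_lipschitzWith_one (hLip i) (hsmall.1.mapsTo_s16 i) ε
  have hPae : ∀ i, F i ⁻¹' P =ᵐ[μ] P := fun i =>
    preimage_ae_eq_of_subset_preimage hmeas hinv hρs' isOpen_thickening.measurableSet hPF (hρi i)
  exact (measure_congr (preimage_foldr_ae_eq
    (fun i => quasiMeasurePreserving_of_eq_sum_smul_map hmeas hinv (hρi i)) hPae l)).symm

theorem measure_enlargement_eq_measure_preimage
    {X : Type*} [MetricSpace X] [CompleteSpace X] [MeasurableSpace X] [BorelSpace X]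
    (F : ℕ → X → X) (hF : ∀ i, ∃ r : ℝ≥0, ContractingWith r (F i))
    (x : ℕ → X) (hx : ∀ i, F i (x i) = x i)
    (ρ : ℕ → ℝ≥0) (hρ : ∀ i, 0 < ρ i ∧ ρ i < 1) (hρs : ∑' i, ρ i = 1)
    (μ : Measure X) [IsProbabilityMeasure μ]
    (hinv : μ = Measure.sum (fun i => (ρ i : ℝ≥0∞) • μ.map (F i)))
    (hsmall : IsInvariantSet F (closure (fixedPtsOfComps F)) ∧
      ∀ A : Set X, IsInvariantSet F A → closure (fixedPtsOfComps F) ⊆ A) :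
    ∀ ε > (0 : ℝ), ∀ l : List ℕ, l ≠ [] →
      μ (Metric.thickening ε (closure (fixedPtsOfComps F))) =
        μ ((fun z => l.foldr (fun i y => F i y) z) ⁻¹'
            Metric.thickening ε (closure (fixedPtsOfComps F))) :=
  measure_enlargement_eq_measure_preimage_general F hF ρ hρ hρs μ hinv hsmall
end
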